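/- arXiv:0912.4048 — 9 statements merged into one kernel-verified Lean document; each statement's English description precedes it below -/
import Mathlib

section
/- For the classical normalized graph Laplacian of a connected finite graph, and any nonempty proper subset A of vertices with complement B, the second smallest eigenvalue satisfies λ₂(X) ≤ |∂A| · (1/vol(A) + 1/vol(B)), where ∂A is the set of directed edges from A to B and vol(S) = Σ_{v∈S} d_v. -/
/-
The second eigenvalue is the minimum of the Rayleigh quotient `⟪f, Δ f⟫ / ⟪f, f⟫` over
`f ⊥ √d`: since `√d` is an eigenvector of the symmetric `Δ`, its orthogonal complement is
`Δ`-invariant, and the restriction of `Δ` to it attains its smallest Rayleigh quotient at an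
eigenvector. As `Δ = T^{-1/2} L T^{-1/2}` with `L` the combinatorial Laplacian, the test
vector `f = √d · y`, where `y = 1 / vol A` on `A` and `y = -1 / vol B` on `B`, is orthogonal
to `√d`, has `⟪f, f⟫ = 1 / vol A + 1 / vol B`, and
`⟪f, Δ f⟫ = ⟪y, L y⟫ = |∂A| (1 / vol A + 1 / vol B)²`.
-/
open Finset

/-- The classical normalized graph Laplacian `Δ = I - T^{-1/2} A T^{-1/2}`. -/
noncomputable def normLap {V : Type} [Fintype V] [DecidableEq V]
    (G : SimpleGraph V) [DecidableRel G.Adj] : Matrix V V ℝ :=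
  Matrix.of fun v w => (if v = w then (1 : ℝ) else 0) -
    (G.adjMatrix ℝ) v w / Real.sqrt ((G.degree v : ℝ) * (G.degree w : ℝ))

/-- The volume of a set of vertices: the sum of the degrees. -/
def vol {V : Type} [Fintype V] [DecidableEq V]
    (G : SimpleGraph V) [DecidableRel G.Adj] (A : Finset V) : ℝ :=
  ∑ v ∈ A, (G.degree v : ℝ)

/-- The number of directed edges from `A` to its complement. -/
def boundaryCard {V : Type} [Fintype V] [DecidableEq V]
    (G : SimpleGraph V) [DecidableRel G.Adj] (A : Finset V) : ℕ :=
  (Finset.univ.filter (fun p : V × V => p.1 ∈ A ∧ p.2 ∉ A ∧ G.Adj p.1 p.2)).card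

open Matrix Module.End
open scoped RealInnerProductSpace

section

variable {E : Type*} [NormedAddCommGroup E] [InnerProductSpace ℝ E] [FiniteDimensional ℝ E]
  {T : E →ₗ[ℝ] E}

theorem LinearMap.IsSymmetric.exists_hasEigenvector_mul_norm_sq_le (hT : T.IsSymmetric)
    {x : E} (hx : x ≠ 0) : ∃ μ v, HasEigenvector T μ v ∧ μ * ‖x‖ ^ 2 ≤ ⟪T x, x⟫ := by
  have : Nontrivial E := ⟨⟨x, 0, hx⟩⟩
  obtain ⟨v, hv⟩ := hT.hasEigenvalue_iInf_of_finiteDimensional.exists_hasEigenvector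
  refine ⟨_, v, hv, ?_⟩
  have hbdd : BddBelow (Set.range fun y : {y : E // y ≠ 0} =>
      RCLike.re ⟪T y, y⟫ / ‖(y : E)‖ ^ 2) := by
    refine ⟨-‖LinearMap.toContinuousLinearMap T‖, ?_⟩
    rintro _ ⟨y, rfl⟩
    exact (abs_le.1 ((LinearMap.toContinuousLinearMap T).rayleighQuotient_le_norm y)).1
  have := ciInf_le hbdd ⟨x, hx⟩
  rwa [le_div_iff₀ (by positivity)] at this

theorem LinearMap.IsSymmetric.exists_hasEigenvector_mem_orthogonal_singleton
    (hT : T.IsSymmetric) {s : E} {σ : ℝ} (hs : T s = σ • s) {x : E} (hx : x ≠ 0)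
    (hxs : ⟪s, x⟫ = 0) :
    ∃ μ v, v ∈ (ℝ ∙ s)ᗮ ∧ HasEigenvector T μ v ∧ μ * ‖x‖ ^ 2 ≤ ⟪T x, x⟫ := by
  have hK : ∀ v ∈ (ℝ ∙ s)ᗮ, T v ∈ (ℝ ∙ s)ᗮ := by
    intro v hv
    rw [Submodule.mem_orthogonal_singleton_iff_inner_right] at hv ⊢
    rw [← hT, hs, inner_smul_left, hv, mul_zero]
  obtain ⟨μ, v, hv, hle⟩ := (hT.restrict_invariant hK).exists_hasEigenvector_mul_norm_sq_le
    (x := ⟨x, Submodule.mem_orthogonal_singleton_iff_inner_right.2 hxs⟩) (by simpa using hx)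
  refine ⟨μ, v, v.2, ⟨?_, by simpa using hv.2⟩, hle⟩
  exact mem_eigenspace_iff.2 (congrArg Subtype.val (mem_eigenspace_iff.1 hv.1))

end

theorem Matrix.IsHermitian.exists_eigenvector_orthogonal_le_rayleigh {n : Type*} [Fintype n]
    [DecidableEq n] {M : Matrix n n ℝ} (hM : M.IsHermitian) {s : n → ℝ} {σ : ℝ}
    (hs : M *ᵥ s = σ • s) {g : n → ℝ} (hg : g ≠ 0) (hgs : g ⬝ᵥ s = 0) :
    ∃ μ f, f ≠ 0 ∧ M *ᵥ f = μ • f ∧ f ⬝ᵥ s = 0 ∧ μ * (g ⬝ᵥ g) ≤ g ⬝ᵥ (M *ᵥ g) := by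
  obtain ⟨μ, v, hvs, hv, hle⟩ :=
    (isSymmetric_toEuclideanLin_iff.2 hM).exists_hasEigenvector_mem_orthogonal_singleton
      (s := WithLp.toLp 2 s) (x := WithLp.toLp 2 g) (σ := σ) (by ext1; simp [hs])
      (by simpa using hg) (by simpa [EuclideanSpace.inner_toLp_toLp] using hgs)
  refine ⟨μ, v.ofLp, by simpa using hv.2, ?_, ?_, ?_⟩
  · have := mem_eigenspace_iff.1 hv.1
    simpa using congrArg WithLp.ofLp this
  · rw [Submodule.mem_orthogonal_singleton_iff_inner_right] at hvs
    simpa [EuclideanSpace.inner_eq_star_dotProduct] using hvs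
  · have hgg : ‖WithLp.toLp 2 g‖ ^ 2 = g ⬝ᵥ g := by
      rw [EuclideanSpace.norm_sq_eq]
      simp [dotProduct, sq]
    simpa [hgg, EuclideanSpace.inner_toLp_toLp] using hle

theorem Matrix.PosSemidef.nonneg_of_mulVec_eq_smul {n : Type*} [Fintype n] {M : Matrix n n ℝ}
    (hM : M.PosSemidef) {f : n → ℝ} (hf : f ≠ 0) {μ : ℝ} (hfμ : M *ᵥ f = μ • f) : 0 ≤ μ := by
  have hff : 0 < f ⬝ᵥ f := by simpa using dotProduct_star_self_pos_iff.2 hf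
  have := hM.dotProduct_mulVec_nonneg f
  rw [star_trivial, hfμ, dotProduct_smul, smul_eq_mul] at this
  exact nonneg_of_mul_nonneg_left this hff

namespace SimpleGraph

variable {V : Type} [Fintype V] (G : SimpleGraph V) [DecidableRel G.Adj]

theorem sqrt_degree_ne_zero {v : V} (hv : 0 < G.degree v) : √(G.degree v : ℝ) ≠ 0 :=
  (Real.sqrt_pos.2 (Nat.cast_pos.2 hv)).ne'

variable [DecidableEq V]

theorem normLap_eq_diagonal_mul_lapMatrix_mul_diagonal (hdeg : ∀ v, 0 < G.degree v) :
    normLap G = diagonal (fun v => (√(G.degree v : ℝ))⁻¹) * G.lapMatrix ℝ *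
      diagonal (fun v => (√(G.degree v : ℝ))⁻¹) := by
  ext v w
  have hv := G.sqrt_degree_ne_zero (hdeg v)
  have hw := G.sqrt_degree_ne_zero (hdeg w)
  rw [mul_diagonal, diagonal_mul, lapMatrix, degMatrix]
  simp only [normLap, of_apply, Matrix.sub_apply, adjMatrix_apply,
    Real.sqrt_mul (Nat.cast_nonneg _)]
  by_cases h : v = w
  · subst h
    simp only [G.irrefl, if_true, if_false, diagonal_apply_eq]
    field_simp
    rw [Real.sq_sqrt (Nat.cast_nonneg _)]
  · simp only [h, if_false, diagonal_apply_ne _ h]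
    split_ifs <;> field_simp <;> ring

theorem posSemidef_normLap (hdeg : ∀ v, 0 < G.degree v) : (normLap G).PosSemidef := by
  rw [normLap_eq_diagonal_mul_lapMatrix_mul_diagonal G hdeg]
  simpa using (posSemidef_lapMatrix ℝ G).mul_mul_conjTranspose_same
    (diagonal fun v => (√(G.degree v : ℝ))⁻¹)

theorem normLap_mulVec_sqrt_degree_mul (hdeg : ∀ v, 0 < G.degree v) (y : V → ℝ) :
    normLap G *ᵥ (fun v => √(G.degree v : ℝ) * y v) =
      fun v => (√(G.degree v : ℝ))⁻¹ * (G.lapMatrix ℝ *ᵥ y) v := by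
  have hy : diagonal (fun v => (√(G.degree v : ℝ))⁻¹) *ᵥ (fun v => √(G.degree v : ℝ) * y v) =
      y := by
    ext v
    have := G.sqrt_degree_ne_zero (hdeg v)
    simp [mulVec_diagonal, inv_mul_cancel_left₀ this]
  rw [normLap_eq_diagonal_mul_lapMatrix_mul_diagonal G hdeg, ← mulVec_mulVec, ← mulVec_mulVec, hy]
  ext v
  simp [mulVec_diagonal]

theorem normLap_mulVec_sqrt_degree (hdeg : ∀ v, 0 < G.degree v) :
    normLap G *ᵥ (fun v => √(G.degree v : ℝ)) = 0 := by
  simpa [lapMatrix_mulVec_const_eq_zero, ← Pi.zero_def] using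
    normLap_mulVec_sqrt_degree_mul G hdeg fun _ => 1

theorem dotProduct_normLap_mulVec_sqrt_degree_mul (hdeg : ∀ v, 0 < G.degree v) (y : V → ℝ) :
    (fun v => √(G.degree v : ℝ) * y v) ⬝ᵥ (normLap G *ᵥ fun v => √(G.degree v : ℝ) * y v) =
      y ⬝ᵥ (G.lapMatrix ℝ *ᵥ y) := by
  rw [normLap_mulVec_sqrt_degree_mul G hdeg]
  refine Finset.sum_congr rfl fun v _ => ?_
  have := G.sqrt_degree_ne_zero (hdeg v)
  field_simp

theorem natCast_boundaryCard (A : Finset V) :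
    (boundaryCard G A : ℝ) = ∑ v, ∑ w, if v ∈ A ∧ w ∉ A ∧ G.Adj v w then 1 else 0 := by
  rw [boundaryCard, natCast_card_filter, ← Fintype.sum_prod_type']

theorem dotProduct_lapMatrix_mulVec_ite (A : Finset V) (α β : ℝ) :
    (fun v => if v ∈ A then α else β) ⬝ᵥ (G.lapMatrix ℝ *ᵥ fun v => if v ∈ A then α else β) =
      boundaryCard G A * (α - β) ^ 2 := by
  rw [← toLinearMap₂'_apply', lapMatrix_toLinearMap₂']
  have hterm : ∀ v w, (if G.Adj v w then
      ((if v ∈ A then α else β) - if w ∈ A then α else β) ^ 2 else 0) =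
      (α - β) ^ 2 * ((if v ∈ A ∧ w ∉ A ∧ G.Adj v w then 1 else 0) +
        if w ∈ A ∧ v ∉ A ∧ G.Adj w v then 1 else 0) := by
    intro v w
    by_cases hv : v ∈ A <;> by_cases hw : w ∈ A <;> by_cases hvw : G.Adj v w <;>
      simp [hv, hw, hvw, G.adj_comm w v, sub_sq_comm β α]
  simp only [hterm, ← Finset.mul_sum, Finset.sum_add_distrib]
  rw [Finset.sum_comm (f := fun v w => if w ∈ A ∧ v ∉ A ∧ G.Adj w v then (1 : ℝ) else 0),
    ← natCast_boundaryCard]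
  ring

theorem sum_degree_mul_ite (A : Finset V) (α β : ℝ) :
    ∑ v, (G.degree v : ℝ) * (if v ∈ A then α else β) = vol G A * α + vol G Aᶜ * β := by
  rw [← Finset.sum_add_sum_compl A, vol, vol, Finset.sum_mul, Finset.sum_mul]
  congr 1 <;> refine Finset.sum_congr rfl fun v hv => ?_
  · rw [if_pos hv]
  · rw [if_neg (Finset.mem_compl.1 hv)]

theorem vol_pos (hdeg : ∀ v, 0 < G.degree v) {A : Finset V} (hA : A.Nonempty) :
    0 < vol G A :=
  Finset.sum_pos (fun v _ => Nat.cast_pos.2 (hdeg v)) hA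

theorem exists_orthogonal_sqrt_degree_rayleigh_eq (hdeg : ∀ v, 0 < G.degree v) {A : Finset V}
    (hA : A.Nonempty) (hA' : A ≠ univ) :
    ∃ g : V → ℝ, g ≠ 0 ∧ g ⬝ᵥ (fun v => √(G.degree v : ℝ)) = 0 ∧
      g ⬝ᵥ (normLap G *ᵥ g) = boundaryCard G A * (1 / vol G A + 1 / vol G Aᶜ) * (g ⬝ᵥ g) := by
  have hvolA := G.vol_pos hdeg hA
  have hvolB := G.vol_pos hdeg ((compl_ne_univ_iff_nonempty Aᶜ).1 (by rwa [compl_compl]))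
  set a := 1 / vol G A
  set b := 1 / vol G Aᶜ
  set y : V → ℝ := fun v => if v ∈ A then a else -b
  have hd : ∀ v, √(G.degree v : ℝ) * √(G.degree v : ℝ) = G.degree v :=
    fun v => Real.mul_self_sqrt (Nat.cast_nonneg _)
  have hgg : (fun v => √(G.degree v : ℝ) * y v) ⬝ᵥ (fun v => √(G.degree v : ℝ) * y v) = a + b := by
    have hterm : ∀ v, √(G.degree v : ℝ) * y v * (√(G.degree v : ℝ) * y v) =
        G.degree v * (if v ∈ A then a ^ 2 else (-b) ^ 2) := fun v => by
      rw [mul_mul_mul_comm, hd, ← sq, ← ite_pow]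
    simp only [dotProduct, hterm, sum_degree_mul_ite]
    simp only [a, b]
    field_simp
  refine ⟨fun v => √(G.degree v : ℝ) * y v, ?_, ?_, ?_⟩
  · obtain ⟨v, hv⟩ := hA
    refine Function.ne_iff.2 ⟨v, ?_⟩
    simp [y, hv, G.sqrt_degree_ne_zero (hdeg v), a, hvolA.ne']
  · have hterm : ∀ v, √(G.degree v : ℝ) * y v * √(G.degree v : ℝ) = G.degree v * y v :=
      fun v => by rw [mul_right_comm, hd]
    simp only [dotProduct, hterm, y, sum_degree_mul_ite]
    simp only [a, b]
    field_simp
    ring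
  · rw [dotProduct_normLap_mulVec_sqrt_degree_mul G hdeg, dotProduct_lapMatrix_mulVec_ite, hgg]
    ring

end SimpleGraph

theorem normLap_cheeger_upper_general {V : Type} [Fintype V] [DecidableEq V]
    (G : SimpleGraph V) [DecidableRel G.Adj]
    (hdeg : ∀ v, 0 < G.degree v)
    (A : Finset V) (hA : A.Nonempty) (hA' : A ≠ Finset.univ) :
    sInf {μ : ℝ | ∃ f : V → ℝ, f ≠ 0 ∧ (normLap G).mulVec f = μ • f ∧
        ∑ v, f v * Real.sqrt (G.degree v) = 0} ≤
      (boundaryCard G A : ℝ) * (1 / vol G A + 1 / vol G Aᶜ) := by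
  have hΔ := G.posSemidef_normLap hdeg
  obtain ⟨g, hg0, hgs, hgΔg⟩ := G.exists_orthogonal_sqrt_degree_rayleigh_eq hdeg hA hA'
  obtain ⟨μ, f, hf0, hfμ, hfs, hμ⟩ := hΔ.isHermitian.exists_eigenvector_orthogonal_le_rayleigh
    (by rw [G.normLap_mulVec_sqrt_degree hdeg, zero_smul]) hg0 hgs
  refine le_trans (csInf_le ⟨0, ?_⟩ ⟨f, hf0, hfμ, hfs⟩) ?_
  · rintro ν ⟨f, hf0, hfν, -⟩
    exact hΔ.nonneg_of_mulVec_eq_smul hf0 hfν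
  · exact le_of_mul_le_mul_right (hμ.trans_eq hgΔg)
      (by simpa using dotProduct_star_self_pos_iff.2 hg0)

/-- Cheeger-type upper bound: for a connected finite graph, the second smallest
eigenvalue of the normalized Laplacian (the smallest eigenvalue on the orthogonal
complement of the bottom eigenvector `v ↦ √d_v`) satisfies
`λ₂(X) ≤ |∂A| (1/vol(A) + 1/vol(B))` for any nonempty proper vertex subset `A`
with complement `B`. -/
theorem normLap_cheeger_upper {V : Type} [Fintype V] [DecidableEq V]
    (G : SimpleGraph V) [DecidableRel G.Adj]
    (hconn : G.Connected) (hdeg : ∀ v, 0 < G.degree v)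
    (A : Finset V) (hA : A.Nonempty) (hA' : A ≠ Finset.univ) :
    sInf {μ : ℝ | ∃ f : V → ℝ, f ≠ 0 ∧ (normLap G).mulVec f = μ • f ∧
        ∑ v, f v * Real.sqrt (G.degree v) = 0} ≤
      (boundaryCard G A : ℝ) * (1 / vol G A + 1 / vol G Aᶜ) :=
  normLap_cheeger_upper_general G hdeg A hA hA'
end

section
/- For a connected finite graph and a vertex subset A with vol(A) ≤ vol(B) where B is the complement, the second eigenvalue of the normalized Laplacian satisfies λ₂(X) ≤ 2|∂A|/vol(A). -/
/-!
By the variational characterization of eigenvalues, some eigenvalue of the normalized Laplacian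
`Δ` with eigenvector orthogonal to its kernel vector `√d` is at most the Rayleigh quotient
`⟨f, Δ f⟩ / ⟨f, f⟩` of any nonzero `f ⊥ √d`. Take `f = √d · g` with `g = 1_A - vol A / vol V`.
Since `Δ = D^{-1/2} L D^{-1/2}` for the degree matrix `D` and the combinatorial Laplacian `L`,
the numerator is `⟨g, L g⟩ = ∑_{v ~ w} (g v - g w)² / 2 = |∂A|`, while the denominator is
`vol A · vol B / vol V ≥ vol A / 2`, because `vol B ≥ vol V / 2`.
-/

open Finset

open Matrix
open scoped RealInnerProductSpace

namespace LinearMap.IsSymmetric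

open Module.End

variable {E : Type*} [NormedAddCommGroup E] [InnerProductSpace ℝ E] [FiniteDimensional ℝ E]
  {T : E →ₗ[ℝ] E}

theorem exists_hasEigenvector_le_rayleigh (hT : T.IsSymmetric) {x : E} (hx : x ≠ 0) :
    ∃ μ y, HasEigenvector T μ y ∧ μ ≤ ⟪T x, x⟫ / ‖x‖ ^ 2 := by
  have : Nontrivial E := ⟨⟨x, 0, hx⟩⟩
  obtain ⟨y, hy⟩ := hT.hasEigenvalue_iInf_of_finiteDimensional.exists_hasEigenvector
  refine ⟨_, y, hy, ciInf_le ⟨-‖T.toContinuousLinearMap‖, ?_⟩ (⟨x, hx⟩ : {x : E // x ≠ 0})⟩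
  rintro _ ⟨z, rfl⟩
  exact (abs_le.mp (T.toContinuousLinearMap.rayleighQuotient_le_norm z)).1

theorem exists_hasEigenvector_mem_le_rayleigh (hT : T.IsSymmetric) {p : Submodule ℝ E}
    (hp : ∀ x ∈ p, T x ∈ p) {x : E} (hxp : x ∈ p) (hx : x ≠ 0) :
    ∃ μ, ∃ y ∈ p, HasEigenvector T μ y ∧ μ ≤ ⟪T x, x⟫ / ‖x‖ ^ 2 := by
  obtain ⟨μ, y, hy, hμ⟩ := (hT.restrict_invariant hp).exists_hasEigenvector_le_rayleigh
    (x := ⟨x, hxp⟩) (by simpa using hx)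
  refine ⟨μ, y, y.2, ⟨?_, by simpa using hy.2⟩, hμ⟩
  simpa [mem_genEigenspace_one] using congrArg Subtype.val hy.apply_eq_smul

end LinearMap.IsSymmetric

namespace Matrix

variable {n : Type*} [Fintype n] [DecidableEq n]

theorem finite_setOf_exists_mulVec_eq_smul {K : Type*} [Field K] (M : Matrix n n K) :
    {μ : K | ∃ f, f ≠ 0 ∧ M *ᵥ f = μ • f}.Finite :=
  (Module.End.finite_hasEigenvalue (toLin' M)).subset fun _ ⟨_, hf, hMf⟩ =>
    Module.End.hasEigenvalue_of_hasEigenvector ⟨Module.End.mem_eigenspace_iff.mpr hMf, hf⟩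

theorem IsHermitian.exists_mulVec_eq_smul_orthogonal_le_rayleigh {M : Matrix n n ℝ}
    (hM : M.IsHermitian) {d x : n → ℝ} (hd : M *ᵥ d = 0) (hxd : x ⬝ᵥ d = 0)
    (hx : x ≠ 0) :
    ∃ μ y, y ≠ 0 ∧ M *ᵥ y = μ • y ∧ y ⬝ᵥ d = 0 ∧ μ ≤ x ⬝ᵥ (M *ᵥ x) / (x ⬝ᵥ x) := by
  have hT := isSymmetric_toEuclideanLin_iff.mpr hM
  have inner_toLp (u v : n → ℝ) : ⟪WithLp.toLp 2 u, WithLp.toLp 2 v⟫ = u ⬝ᵥ v := by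
    simp [EuclideanSpace.inner_toLp_toLp, dotProduct_comm]
  have hinv : ∀ z ∈ (ℝ ∙ WithLp.toLp 2 d)ᗮ, toEuclideanLin M z ∈ (ℝ ∙ WithLp.toLp 2 d)ᗮ := by
    intro z hz
    rw [Submodule.mem_orthogonal_singleton_iff_inner_right] at hz ⊢
    rw [← hT, toLpLin_toLp, toLin'_apply, hd]; exact inner_zero_left _
  have hxp : WithLp.toLp 2 x ∈ (ℝ ∙ WithLp.toLp 2 d)ᗮ := by
    rw [Submodule.mem_orthogonal_singleton_iff_inner_right, inner_toLp, dotProduct_comm, hxd]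
  obtain ⟨μ, y, hyp, hy, hμ⟩ :=
    hT.exists_hasEigenvector_mem_le_rayleigh hinv hxp (by simpa using hx)
  obtain ⟨y, rfl⟩ : ∃ y' : n → ℝ, y = WithLp.toLp 2 y' := ⟨_, (WithLp.toLp_ofLp _ y).symm⟩
  rw [Submodule.mem_orthogonal_singleton_iff_inner_right, inner_toLp] at hyp
  rw [toLpLin_toLp, toLin'_apply, ← real_inner_self_eq_norm_sq, inner_toLp, inner_toLp] at hμ
  refine ⟨μ, y, by simpa using hy.2, ?_, by rwa [dotProduct_comm], by rwa [dotProduct_comm]⟩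
  simpa using congrArg WithLp.ofLp hy.apply_eq_smul

theorem IsHermitian.sInf_le_rayleigh {M : Matrix n n ℝ} (hM : M.IsHermitian) {d x : n → ℝ}
    (hd : M *ᵥ d = 0) (hxd : x ⬝ᵥ d = 0) (hx : x ≠ 0) :
    sInf {μ : ℝ | ∃ f, f ≠ 0 ∧ M *ᵥ f = μ • f ∧ f ⬝ᵥ d = 0} ≤ x ⬝ᵥ (M *ᵥ x) / (x ⬝ᵥ x) := by
  obtain ⟨μ, y, hy, hMy, hyd, hμ⟩ := hM.exists_mulVec_eq_smul_orthogonal_le_rayleigh hd hxd hx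
  have hbdd : BddBelow {μ : ℝ | ∃ f, f ≠ 0 ∧ M *ᵥ f = μ • f ∧ f ⬝ᵥ d = 0} := by
    refine (M.finite_setOf_exists_mulVec_eq_smul.subset ?_).bddBelow
    rintro _ ⟨f, hf, hMf, -⟩
    exact ⟨f, hf, hMf⟩
  exact (csInf_le hbdd ⟨y, hy, hMy, hyd⟩).trans hμ

end Matrix

section NormLap

variable {V : Type} [Fintype V] [DecidableEq V] (G : SimpleGraph V) [DecidableRel G.Adj]

theorem isHermitian_normLap : (normLap G).IsHermitian := by
  ext v w
  simp [normLap, G.adj_comm, eq_comm, mul_comm]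

theorem normLap_eq_diagonal_mul_lapMatrix_mul_diagonal (hdeg : ∀ v, 0 < G.degree v) :
    normLap G = diagonal (fun v => (√(G.degree v))⁻¹) * G.lapMatrix ℝ *
      diagonal (fun v => (√(G.degree v))⁻¹) := by
  ext v w
  rw [mul_diagonal, diagonal_mul]
  by_cases h : v = w
  · subst h
    have hv : 0 < √(G.degree v : ℝ) := Real.sqrt_pos.mpr (by exact_mod_cast hdeg v)
    simp only [normLap, SimpleGraph.lapMatrix, SimpleGraph.degMatrix, of_apply, Matrix.sub_apply,
      SimpleGraph.adjMatrix_apply, G.loopless.irrefl, if_true, if_false]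
    rw [← Real.mul_self_sqrt (Nat.cast_nonneg (G.degree v))]
    field_simp
    simp
  · simp [normLap, SimpleGraph.lapMatrix, SimpleGraph.degMatrix, h, Real.sqrt_mul]
    split_ifs <;> simp [mul_comm]

theorem normLap_mulVec_sqrt_degree (hdeg : ∀ v, 0 < G.degree v) :
    normLap G *ᵥ (fun v => √(G.degree v)) = 0 := by
  have hD : diagonal (fun v => (√(G.degree v))⁻¹) *ᵥ (fun v => √(G.degree v)) = fun _ => 1 :=
    funext fun v => by
      rw [mulVec_diagonal, inv_mul_cancel₀ (Real.sqrt_pos.mpr (by exact_mod_cast hdeg v)).ne']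
  rw [normLap_eq_diagonal_mul_lapMatrix_mul_diagonal G hdeg, ← mulVec_mulVec, ← mulVec_mulVec,
    hD, SimpleGraph.lapMatrix_mulVec_const_eq_zero, mulVec_zero]

theorem dotProduct_normLap_mulVec (hdeg : ∀ v, 0 < G.degree v) (g : V → ℝ) :
    (fun v => √(G.degree v) * g v) ⬝ᵥ (normLap G *ᵥ fun v => √(G.degree v) * g v) =
      g ⬝ᵥ (G.lapMatrix ℝ *ᵥ g) := by
  have hsqrt (v : V) : √(G.degree v : ℝ) ≠ 0 := (Real.sqrt_pos.mpr (by exact_mod_cast hdeg v)).ne'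
  have hD : diagonal (fun v => (√(G.degree v))⁻¹) *ᵥ (fun v => √(G.degree v) * g v) = g :=
    funext fun v => by rw [mulVec_diagonal, inv_mul_cancel_left₀ (hsqrt v)]
  have hD' : (fun v => √(G.degree v) * g v) ᵥ* diagonal (fun v => (√(G.degree v))⁻¹) = g :=
    funext fun v => by rw [vecMul_diagonal, mul_comm, inv_mul_cancel_left₀ (hsqrt v)]
  rw [normLap_eq_diagonal_mul_lapMatrix_mul_diagonal G hdeg, ← mulVec_mulVec, ← mulVec_mulVec,
    hD, dotProduct_mulVec, hD']

theorem dotProduct_lapMatrix_mulVec_sub_const (x : V → ℝ) (c : ℝ) :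
    (x - fun _ => c) ⬝ᵥ (G.lapMatrix ℝ *ᵥ (x - fun _ => c)) = x ⬝ᵥ (G.lapMatrix ℝ *ᵥ x) := by
  simp only [← toLinearMap₂'_apply', SimpleGraph.lapMatrix_toLinearMap₂', Pi.sub_apply,
    sub_sub_sub_cancel_right]

theorem boundaryCard_eq_sum (A : Finset V) :
    (boundaryCard G A : ℝ) = ∑ v, ∑ w, if v ∈ A ∧ w ∉ A ∧ G.Adj v w then 1 else 0 := by
  rw [boundaryCard, card_filter, Nat.cast_sum, Fintype.sum_prod_type]
  push_cast
  rfl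

theorem dotProduct_lapMatrix_mulVec_indicator (A : Finset V) :
    (fun v => if v ∈ A then 1 else 0) ⬝ᵥ (G.lapMatrix ℝ *ᵥ fun v => if v ∈ A then 1 else 0) =
      boundaryCard G A := by
  have hsq (v w : V) : (if G.Adj v w then
      ((if v ∈ A then 1 else 0) - (if w ∈ A then 1 else 0) : ℝ) ^ 2 else 0) =
      (if v ∈ A ∧ w ∉ A ∧ G.Adj v w then 1 else 0) +
        (if w ∈ A ∧ v ∉ A ∧ G.Adj w v then 1 else 0) := by
    by_cases hv : v ∈ A <;> by_cases hw : w ∈ A <;> by_cases hvw : G.Adj v w <;>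
      simp [hv, hw, hvw, G.adj_comm w v]
  rw [← toLinearMap₂'_apply', SimpleGraph.lapMatrix_toLinearMap₂']
  simp only [hsq, sum_add_distrib]
  rw [sum_comm (f := fun v w => if w ∈ A ∧ v ∉ A ∧ G.Adj w v then (1 : ℝ) else 0),
    ← boundaryCard_eq_sum]
  ring

theorem vol_add_vol_compl (A : Finset V) : vol G A + vol G Aᶜ = vol G univ :=
  sum_add_sum_compl A _

noncomputable def cheegerTestVector (A : Finset V) : V → ℝ :=
  fun v => √(G.degree v) * ((if v ∈ A then 1 else 0) - vol G A / vol G univ)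

theorem cheegerTestVector_dotProduct_sqrt_degree {A : Finset V} (h : vol G univ ≠ 0) :
    ∑ v, cheegerTestVector G A v * √(G.degree v) = 0 := by
  have hsq (v : V) : √(G.degree v : ℝ) * √(G.degree v) = G.degree v :=
    Real.mul_self_sqrt (Nat.cast_nonneg _)
  calc ∑ v, cheegerTestVector G A v * √(G.degree v)
      = ∑ v, ((G.degree v : ℝ) * (if v ∈ A then 1 else 0) -
          (G.degree v : ℝ) * (vol G A / vol G univ)) :=
        sum_congr rfl fun v _ => by rw [cheegerTestVector, mul_comm, ← mul_assoc, hsq, mul_sub]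
    _ = vol G A - vol G univ * (vol G A / vol G univ) := by
        simp [sum_sub_distrib, ← sum_mul, vol]
    _ = 0 := by rw [mul_div_cancel₀ _ h, sub_self]

theorem cheegerTestVector_dotProduct_self {A : Finset V} (h : vol G univ ≠ 0) :
    cheegerTestVector G A ⬝ᵥ cheegerTestVector G A = vol G A * vol G Aᶜ / vol G univ := by
  have hsq (v : V) (x : ℝ) : √(G.degree v : ℝ) * x * (√(G.degree v) * x) = G.degree v * x ^ 2 := by
    rw [mul_mul_mul_comm, Real.mul_self_sqrt (Nat.cast_nonneg _), sq]
  calc cheegerTestVector G A ⬝ᵥ cheegerTestVector G A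
      = ∑ v, (G.degree v : ℝ) * ((if v ∈ A then 1 else 0) - vol G A / vol G univ) ^ 2 :=
        sum_congr rfl fun v _ => hsq v _
    _ = vol G A * (1 - vol G A / vol G univ) ^ 2 + vol G Aᶜ * (vol G A / vol G univ) ^ 2 := by
        generalize vol G A / vol G univ = c
        rw [← sum_add_sum_compl A, vol, vol, sum_mul, sum_mul]
        congr 1
        · exact sum_congr rfl fun v hv => by simp [hv]
        · exact sum_congr rfl fun v hv => by simp [mem_compl.mp hv]
    _ = vol G A * vol G Aᶜ / vol G univ := by
        rw [← vol_add_vol_compl] at h ⊢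
        field_simp
        ring

theorem cheegerTestVector_dotProduct_normLap_mulVec (hdeg : ∀ v, 0 < G.degree v)
    (A : Finset V) :
    cheegerTestVector G A ⬝ᵥ (normLap G *ᵥ cheegerTestVector G A) = boundaryCard G A :=
  (dotProduct_normLap_mulVec G hdeg _).trans <|
    (dotProduct_lapMatrix_mulVec_sub_const G _ (vol G A / vol G univ)).trans
      (dotProduct_lapMatrix_mulVec_indicator G A)

end NormLap

theorem normLap_cheeger_upper'_general {V : Type} [Fintype V] [DecidableEq V]
    (G : SimpleGraph V) [DecidableRel G.Adj]
    (hdeg : ∀ v, 0 < G.degree v)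
    (A : Finset V) (hA : A.Nonempty) (hvol : vol G A ≤ vol G Aᶜ) :
    sInf {μ : ℝ | ∃ f : V → ℝ, f ≠ 0 ∧ (normLap G).mulVec f = μ • f ∧
        ∑ v, f v * Real.sqrt (G.degree v) = 0} ≤
      2 * (boundaryCard G A : ℝ) / vol G A := by
  have hA₀ : 0 < vol G A := sum_pos (fun v _ => by exact_mod_cast hdeg v) hA
  have hAc₀ : 0 < vol G Aᶜ := hA₀.trans_le hvol
  have hV : vol G A + vol G Aᶜ = vol G univ := vol_add_vol_compl G A
  have hV₀ : vol G univ ≠ 0 := by linarith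
  have hff := cheegerTestVector_dotProduct_self G (A := A) hV₀
  have hf : cheegerTestVector G A ≠ 0 := by
    intro h
    rw [h, zero_dotProduct, eq_comm] at hff
    exact (div_pos (mul_pos hA₀ hAc₀) (by linarith)).ne' hff
  calc _ ≤ _ := (isHermitian_normLap G).sInf_le_rayleigh (normLap_mulVec_sqrt_degree G hdeg)
        (cheegerTestVector_dotProduct_sqrt_degree G hV₀) hf
    _ = boundaryCard G A / (vol G A * vol G Aᶜ / vol G univ) := by
      rw [cheegerTestVector_dotProduct_normLap_mulVec G hdeg, hff]
    _ ≤ 2 * boundaryCard G A / vol G A := by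
      rw [← hV, div_div_eq_mul_div, div_le_div_iff₀ (by positivity) hA₀]
      have := mul_nonneg (mul_nonneg (Nat.cast_nonneg (boundaryCard G A)) hA₀.le)
        (sub_nonneg.mpr hvol)
      nlinarith

/-- For a connected finite graph and a vertex subset `A` with
`vol(A) ≤ vol(B)` (`B` the complement), the second smallest eigenvalue of the
normalized Laplacian satisfies `λ₂(X) ≤ 2 |∂A| / vol(A)`. -/
theorem normLap_cheeger_upper' {V : Type} [Fintype V] [DecidableEq V]
    (G : SimpleGraph V) [DecidableRel G.Adj]
    (hconn : G.Connected) (hdeg : ∀ v, 0 < G.degree v)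
    (A : Finset V) (hA : A.Nonempty) (hvol : vol G A ≤ vol G Aᶜ) :
    sInf {μ : ℝ | ∃ f : V → ℝ, f ≠ 0 ∧ (normLap G).mulVec f = μ • f ∧
        ∑ v, f v * Real.sqrt (G.degree v) = 0} ≤
      2 * (boundaryCard G A : ℝ) / vol G A :=
  normLap_cheeger_upper'_general G hdeg A hA hvol
end

section
/- Let P be a transmission system on a finite graph X, assigning to each directed edge e⃗ from v to w an n(w)×n(v) complex matrix P(e⃗). If λ is an eigenvalue of the transmission graph Laplacian Δ^P, then |λ − 1| ≤ max over directed edges e⃗ of the operator norm ‖P(e⃗)‖. -/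
/-! Pair the eigenvalue equation with `f`: writing `f_v` for the block of `f` at `v`,
`(1 - λ) ‖f‖² = ⟪f, f - Δ^P f⟫ = Σ_e (d_{t e} d_{i e})^{-1/2} ⟪f_{t e}, P(e) f_{i e}⟫`.
Each term is at most `‖P(e)‖ ‖f_{t e}‖ ‖f_{i e}‖`, and by AM-GM the weighted sum
of `‖f_{t e}‖ ‖f_{i e}‖` is at most the mean of `Σ_e ‖f_{t e}‖² / d_{t e}` and
`Σ_e ‖f_{i e}‖² / d_{i e}`. Both sums equal `‖f‖²`: the first because `d_v` edges
end at `v`, the second because reversing edges exchanges `i` and `t`. -/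

open Finset

/-- A finite graph presented by its set of directed edges: `op` reverses a
directed edge, `i` and `t` give the initial and terminal vertices. -/
structure DGraph (V : Type) where
  E : Type
  [fE : Fintype E]
  [dE : DecidableEq E]
  op : E → E
  op_op : ∀ e, op (op e) = e
  i : E → V
  t : E → V
  i_op : ∀ e, i (op e) = t e
  t_op : ∀ e, t (op e) = i e

attribute [instance] DGraph.fE DGraph.dE

/-- The degree of a vertex: the number of directed edges terminating there. -/
def DGraph.deg {V : Type} [DecidableEq V] (G : DGraph V) (w : V) : ℕ :=
  (Finset.univ.filter (fun e => G.t e = w)).card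

/-- A transmission system on a graph, presented in assembled ("big matrix")
form: the data banks `ℂ^{n(v)}` at the vertices are the fibers of `π : B → V`,
and the transmission matrix `P e` of a directed edge `e` is supported on the
block (fiber of `t e`) × (fiber of `i e`). -/
def IsTransmission {V B : Type} (G : DGraph V) (π : B → V)
    (P : G.E → Matrix B B ℂ) : Prop :=
  ∀ e b b', P e b b' ≠ 0 → π b = G.t e ∧ π b' = G.i e

/-- The transmission graph Laplacian
`(Δ^P f)(w) = f(w) - Σ_{e : t(e)=w} (d_w d_{i(e)})^{-1/2} P(e) f(i(e))`. -/
noncomputable def transLap {V B : Type} [DecidableEq V] [Fintype B]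
    (G : DGraph V) (π : B → V) (P : G.E → Matrix B B ℂ)
    (f : B → ℂ) : B → ℂ := fun b =>
  f b - ∑ e ∈ Finset.univ.filter (fun e => G.t e = π b),
    (Real.sqrt ((G.deg (π b) : ℝ) * (G.deg (G.i e) : ℝ)) : ℂ)⁻¹ *
      ∑ b', P e b b' * f b'

open Matrix WithLp

theorem Matrix.norm_star_dotProduct_mulVec_le {𝕜 n : Type*} [RCLike 𝕜] [Fintype n]
    [DecidableEq n] (A : Matrix n n 𝕜) (x y : n → 𝕜) :
    ‖star x ⬝ᵥ A *ᵥ y‖ ≤ ‖toEuclideanCLM (𝕜 := 𝕜) A‖ * ‖toLp 2 x‖ * ‖toLp 2 y‖ := by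
  have hinner : star x ⬝ᵥ A *ᵥ y =
      inner 𝕜 (toLp 2 x) (toEuclideanCLM (𝕜 := 𝕜) A (toLp 2 y)) := by
    rw [toEuclideanCLM_toLp, EuclideanSpace.inner_toLp_toLp, dotProduct_comm]
  calc ‖star x ⬝ᵥ A *ᵥ y‖
      ≤ ‖toLp 2 x‖ * ‖toEuclideanCLM (𝕜 := 𝕜) A (toLp 2 y)‖ :=
        hinner ▸ norm_inner_le_norm _ _
    _ ≤ ‖toLp 2 x‖ * (‖toEuclideanCLM (𝕜 := 𝕜) A‖ * ‖toLp 2 y‖) := by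
        gcongr; exact ContinuousLinearMap.le_opNorm _ _
    _ = _ := by ring

theorem EuclideanSpace.norm_sq_toLp_indicator_preimage {𝕜 B V : Type*} [RCLike 𝕜] [Fintype B]
    [DecidableEq V] (π : B → V) (v : V) (f : B → 𝕜) :
    ‖toLp 2 ((π ⁻¹' {v}).indicator f)‖ ^ 2 =
      ∑ b ∈ univ.filter (π · = v), ‖f b‖ ^ 2 := by
  rw [EuclideanSpace.norm_sq_eq, sum_filter]
  refine sum_congr rfl fun b _ => ?_
  by_cases h : π b = v <;> simp [h]

theorem Real.inv_sqrt_mul_mul_le {p q : ℝ} (hp : 0 ≤ p) (hq : 0 ≤ q) (x y : ℝ) :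
    (√(p * q))⁻¹ * (x * y) ≤ (x ^ 2 / p + y ^ 2 / q) / 2 := by
  have h := two_mul_le_add_sq (x / √p) (y / √q)
  rw [div_pow, div_pow, Real.sq_sqrt hp, Real.sq_sqrt hq] at h
  rw [Real.sqrt_mul hp, mul_inv]
  linarith [show (√p)⁻¹ * (√q)⁻¹ * (x * y) = x / √p * (y / √q) by ring]

namespace DGraph

variable {V : Type} (G : DGraph V)

theorem sum_comp_i_eq_sum_comp_t {M : Type*} [AddCommMonoid M] (g : V → M) :
    ∑ e, g (G.i e) = ∑ e, g (G.t e) :=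
  Fintype.sum_equiv (Function.Involutive.toPerm G.op G.op_op) _ _ fun e =>
    congrArg g (G.t_op e).symm

theorem sum_inv_deg_mul_sum_fiber_eq_sum [DecidableEq V] {B K : Type*} [Fintype B] [Semifield K]
    [CharZero K] (π : B → V) (hdeg : ∀ v, G.deg v ≠ 0) (g : B → K) :
    ∑ e, (G.deg (G.t e) : K)⁻¹ * ∑ b ∈ univ.filter (π · = G.t e), g b = ∑ b, g b := by
  simp_rw [mul_sum, sum_filter]
  rw [sum_comm]
  refine sum_congr rfl fun b _ => ?_
  rw [← sum_filter, sum_congr rfl fun e he => by rw [(mem_filter.1 he).2.symm]]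
  have hcard : #(univ.filter (π b = G.t ·)) = G.deg (π b) := by
    simp_rw [eq_comm (a := π b)]; rfl
  rw [sum_const, hcard, nsmul_eq_mul, ← mul_assoc, mul_inv_cancel₀ (by exact_mod_cast hdeg _),
    one_mul]

end DGraph

section Transmission

variable {V B : Type} [Fintype B] {G : DGraph V} {π : B → V} {P : G.E → Matrix B B ℂ}

theorem IsTransmission.mulVec_indicator (hP : IsTransmission G π P) (e : G.E) (f : B → ℂ) :
    P e *ᵥ (π ⁻¹' {G.i e}).indicator f = P e *ᵥ f := by
  ext b
  refine sum_congr rfl fun b' _ => ?_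
  by_cases h : π b' = G.i e
  · simp [h]
  · have hzero : P e b b' = 0 := by_contra fun hne => h (hP e b b' hne).2
    simp [hzero]

variable [DecidableEq V]

theorem star_dotProduct_sub_transLap (hP : IsTransmission G π P) (f : B → ℂ) :
    star f ⬝ᵥ (f - transLap G π P f) =
      ∑ e, (√((G.deg (G.t e) : ℝ) * G.deg (G.i e)) : ℂ)⁻¹ *
        (star ((π ⁻¹' {G.t e}).indicator f) ⬝ᵥ
          P e *ᵥ (π ⁻¹' {G.i e}).indicator f) := by
  have hsub : f - transLap G π P f = fun b => ∑ e ∈ univ.filter (G.t · = π b),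
      (√((G.deg (π b) : ℝ) * G.deg (G.i e)) : ℂ)⁻¹ * (P e *ᵥ f) b := by
    ext b
    simp [transLap, mulVec, dotProduct]
  simp_rw [hP.mulVec_indicator, hsub, dotProduct, mul_sum, sum_filter]
  rw [sum_comm]
  refine sum_congr rfl fun e _ => sum_congr rfl fun b _ => ?_
  by_cases h : G.t e = π b
  · simp [h, mul_left_comm]
  · simp [h, Ne.symm h]

theorem norm_star_dotProduct_sub_transLap_le [DecidableEq B] (hP : IsTransmission G π P)
    (hdeg : ∀ v, G.deg v ≠ 0) {C : ℝ} (hC0 : 0 ≤ C)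
    (hC : ∀ e, ‖toEuclideanCLM (𝕜 := ℂ) (P e)‖ ≤ C) (f : B → ℂ) :
    ‖star f ⬝ᵥ (f - transLap G π P f)‖ ≤ C * ‖toLp 2 f‖ ^ 2 := by
  set x : V → ℝ := fun v => ‖toLp 2 ((π ⁻¹' {v}).indicator f)‖
  have hx : ∑ e, x (G.t e) ^ 2 / G.deg (G.t e) = ‖toLp 2 f‖ ^ 2 := by
    simp_rw [x, EuclideanSpace.norm_sq_toLp_indicator_preimage, div_eq_inv_mul,
      G.sum_inv_deg_mul_sum_fiber_eq_sum π hdeg, EuclideanSpace.norm_sq_eq]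
  rw [star_dotProduct_sub_transLap hP]
  calc _ ≤ ∑ e, (√((G.deg (G.t e) : ℝ) * G.deg (G.i e)))⁻¹ *
        (C * (x (G.t e) * x (G.i e))) := by
        refine (norm_sum_le _ _).trans (sum_le_sum fun e _ => ?_)
        rw [norm_mul, norm_inv, Complex.norm_real, Real.norm_of_nonneg (Real.sqrt_nonneg _)]
        gcongr
        exact (Matrix.norm_star_dotProduct_mulVec_le _ _ _).trans (by
          rw [mul_assoc]; gcongr; exact hC e)
    _ = C * ∑ e, (√((G.deg (G.t e) : ℝ) * G.deg (G.i e)))⁻¹ * (x (G.t e) * x (G.i e)) := by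
        rw [mul_sum]; exact sum_congr rfl fun e _ => by ring
    _ ≤ C * ∑ e, (x (G.t e) ^ 2 / G.deg (G.t e) + x (G.i e) ^ 2 / G.deg (G.i e)) / 2 := by
        gcongr with e
        exact Real.inv_sqrt_mul_mul_le (by positivity) (by positivity) _ _
    _ = C * ‖toLp 2 f‖ ^ 2 := by
        rw [← sum_div, sum_add_distrib,
          G.sum_comp_i_eq_sum_comp_t (fun v => x v ^ 2 / G.deg v), hx]
        ring

end Transmission

theorem transLap_eigenvalue_dist_one_le_general {V B : Type} [DecidableEq V]
    [Fintype B] [DecidableEq B]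
    (G : DGraph V) (π : B → V) (P : G.E → Matrix B B ℂ)
    (hP : IsTransmission G π P) (hdeg : ∀ v, 0 < G.deg v)
    (lam : ℂ) (f : B → ℂ) (hf : f ≠ 0)
    (heig : transLap G π P f = lam • f) :
    ‖lam - 1‖ ≤ ⨆ e : G.E, ‖Matrix.toEuclideanCLM (𝕜 := ℂ) (P e)‖ := by
  have hC : ∀ e,
      ‖toEuclideanCLM (𝕜 := ℂ) (P e)‖ ≤ ⨆ e, ‖toEuclideanCLM (𝕜 := ℂ) (P e)‖ :=
    le_ciSup (Set.finite_range _).bddAbove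
  have hbound := norm_star_dotProduct_sub_transLap_le hP (fun v => (hdeg v).ne')
    (Real.iSup_nonneg fun e => norm_nonneg _) hC f
  have hrayleigh : star f ⬝ᵥ (f - transLap G π P f) =
      (1 - lam) * (‖toLp 2 f‖ : ℂ) ^ 2 := by
    rw [heig, show f - lam • f = (1 - lam) • f by rw [sub_smul, one_smul], dotProduct_smul,
      smul_eq_mul, dotProduct_comm, ← EuclideanSpace.inner_toLp_toLp, inner_self_eq_norm_sq_to_K]
    rfl
  have hf_pos : 0 < ‖toLp 2 f‖ ^ 2 := pow_pos (norm_pos_iff.2 (by simpa using hf)) 2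
  rw [hrayleigh, norm_mul, norm_pow, Complex.norm_real, norm_norm] at hbound
  rw [norm_sub_rev]
  exact le_of_mul_le_mul_right hbound hf_pos

/-- If λ is an eigenvalue of the transmission graph Laplacian Δ^P then
|λ - 1| ≤ max over directed edges of the operator norm ‖P(e)‖. -/
theorem transLap_eigenvalue_dist_one_le {V B : Type} [Fintype V] [DecidableEq V]
    [Fintype B] [DecidableEq B]
    (G : DGraph V) (π : B → V) (P : G.E → Matrix B B ℂ)
    (hP : IsTransmission G π P) (hdeg : ∀ v, 0 < G.deg v)
    (lam : ℂ) (f : B → ℂ) (hf : f ≠ 0)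
    (heig : transLap G π P f = lam • f) :
    ‖lam - 1‖ ≤ ⨆ e : G.E, ‖Matrix.toEuclideanCLM (𝕜 := ℂ) (P e)‖ :=
  transLap_eigenvalue_dist_one_le_general G π P hP hdeg lam f hf heig
end

section
/- If λ is an eigenvalue of the transmission graph Laplacian Δ^P, then its imaginary part satisfies |Im(λ)| ≤ (1/2) · max over directed edges e⃗ of ‖P(e⃗)* − P(op(e⃗))‖. -/
open Finset Matrix

/-!
Write `Δ^P = 1 - A` with `A = ∑ₑ wₑ P(e)`, `wₑ = (d_{t e} d_{i e})^{-1/2}`. For an eigenvector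
`f`, `⟨f, A f⟩ = (1 - λ) ‖f‖²`, so `2 |Im λ| ‖f‖² = |⟨f, (A* - A) f⟩|`. Reindexing by `op` gives
`A* - A = ∑ₑ wₑ (P(e)* - P(op e))`, and the `e`-th summand only pairs the restrictions of `f`
to the fibres over `i e` and `t e`. Cauchy–Schwarz and `wₑ a b ≤ (a²/d_{i e} + b²/d_{t e}) / 2`
then bound `|⟨f, (A* - A) f⟩|` by `max ‖P(e)* - P(op e)‖ · ‖f‖²`.
-/

open scoped InnerProductSpace

namespace DGraph

variable {V : Type} (G : DGraph V)

theorem sum_comp_op {M : Type*} [AddCommMonoid M] (φ : G.E → M) :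
    ∑ e, φ (G.op e) = ∑ e, φ e :=
  Equiv.sum_comp (Function.Involutive.toPerm G.op G.op_op) φ

variable [DecidableEq V]

noncomputable def edgeWeight (e : G.E) : ℝ :=
  (√((G.deg (G.t e) : ℝ) * G.deg (G.i e)))⁻¹

theorem edgeWeight_nonneg (e : G.E) : 0 ≤ G.edgeWeight e := by
  unfold edgeWeight; positivity

theorem edgeWeight_op (e : G.E) : G.edgeWeight (G.op e) = G.edgeWeight e := by
  rw [edgeWeight, edgeWeight, G.t_op, G.i_op, mul_comm]

theorem edgeWeight_mul_le (e : G.E) (x y : ℝ) :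
    G.edgeWeight e * (x * y) ≤ (x ^ 2 / G.deg (G.i e) + y ^ 2 / G.deg (G.t e)) / 2 := by
  have hi : (0 : ℝ) ≤ G.deg (G.i e) := Nat.cast_nonneg _
  have ht : (0 : ℝ) ≤ G.deg (G.t e) := Nat.cast_nonneg _
  have hw : G.edgeWeight e * (x * y) = x / √(G.deg (G.i e)) * (y / √(G.deg (G.t e))) := by
    rw [edgeWeight, Real.sqrt_mul ht]; field_simp
  have hx : (x / √(G.deg (G.i e))) ^ 2 = x ^ 2 / G.deg (G.i e) := by rw [div_pow, Real.sq_sqrt hi]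
  have hy : (y / √(G.deg (G.t e))) ^ 2 = y ^ 2 / G.deg (G.t e) := by rw [div_pow, Real.sq_sqrt ht]
  rw [hw, ← hx, ← hy]
  linarith [two_mul_le_add_sq (x / √(G.deg (G.i e))) (y / √(G.deg (G.t e)))]

theorem sum_div_deg_t_le [Fintype V] (g : V → ℝ) (hg : 0 ≤ g) :
    ∑ e, g (G.t e) / G.deg (G.t e) ≤ ∑ v, g v := by
  rw [← Finset.sum_fiberwise Finset.univ G.t]
  refine Finset.sum_le_sum fun v _ => ?_
  rw [Finset.sum_congr rfl fun e he => by rw [(Finset.mem_filter.1 he).2], Finset.sum_const,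
    nsmul_eq_mul]
  change (G.deg v : ℝ) * (g v / G.deg v) ≤ g v
  rcases eq_or_ne (G.deg v) 0 with h | h
  · simpa [h] using hg v
  · rw [mul_div_cancel₀ _ (Nat.cast_ne_zero.2 h)]

theorem sum_edgeWeight_mul_le [Fintype V] (a : V → ℝ) :
    ∑ e, G.edgeWeight e * (a (G.i e) * a (G.t e)) ≤ ∑ v, a v ^ 2 := by
  have hi : ∑ e, a (G.i e) ^ 2 / G.deg (G.i e) = ∑ e, a (G.t e) ^ 2 / G.deg (G.t e) := by
    simpa only [G.t_op] using G.sum_comp_op fun e => a (G.t e) ^ 2 / G.deg (G.t e)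
  have ht := G.sum_div_deg_t_le (fun v => a v ^ 2) fun v => sq_nonneg (a v)
  calc ∑ e, G.edgeWeight e * (a (G.i e) * a (G.t e))
      ≤ ∑ e, (a (G.i e) ^ 2 / G.deg (G.i e) + a (G.t e) ^ 2 / G.deg (G.t e)) / 2 :=
        Finset.sum_le_sum fun e _ => G.edgeWeight_mul_le e _ _
    _ ≤ ∑ v, a v ^ 2 := by
        rw [← Finset.sum_div, Finset.sum_add_distrib, hi]; linarith

end DGraph

theorem ContinuousLinearMap.norm_inner_adjoint_sub_self {E : Type*} [NormedAddCommGroup E]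
    [InnerProductSpace ℂ E] [CompleteSpace E] (T : E →L[ℂ] E) (x : E) :
    ‖⟪x, (adjoint T - T) x⟫_ℂ‖ = 2 * |(⟪x, T x⟫_ℂ).im| := by
  rw [_root_.sub_apply, inner_sub_right, adjoint_inner_right, ← inner_conj_symm, norm_sub_rev,
    Complex.sub_conj]
  simp

namespace Matrix

variable {𝕜 B : Type*} [RCLike 𝕜] [Fintype B] [DecidableEq B]

theorem toEuclideanCLM_conjTranspose (A : Matrix B B 𝕜) :
    toEuclideanCLM (𝕜 := 𝕜) Aᴴ = ContinuousLinearMap.adjoint (toEuclideanCLM (𝕜 := 𝕜) A) :=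
  (map_star (toEuclideanCLM (𝕜 := 𝕜)) A).trans (ContinuousLinearMap.star_eq_adjoint _)

theorem norm_inner_toEuclideanCLM_le_of_support (A : Matrix B B 𝕜) {s s' : Set B}
    (hA : ∀ b b', A b b' ≠ 0 → b ∈ s ∧ b' ∈ s') (f : B → 𝕜) :
    ‖⟪WithLp.toLp 2 f, toEuclideanCLM (𝕜 := 𝕜) A (WithLp.toLp 2 f)⟫_𝕜‖ ≤
      ‖toEuclideanCLM (𝕜 := 𝕜) A‖ *
        (‖WithLp.toLp 2 (s.indicator f)‖ * ‖WithLp.toLp 2 (s'.indicator f)‖) := by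
  set fs := WithLp.toLp 2 (s.indicator f)
  set fs' := WithLp.toLp 2 (s'.indicator f)
  have hrestrict : ⟪WithLp.toLp 2 f, toEuclideanCLM (𝕜 := 𝕜) A (WithLp.toLp 2 f)⟫_𝕜 =
      ⟪fs, toEuclideanCLM (𝕜 := 𝕜) A fs'⟫_𝕜 := by
    simp only [fs, fs', toEuclideanCLM_toLp, EuclideanSpace.inner_toLp_toLp, dotProduct, mulVec,
      Finset.sum_mul]
    refine Finset.sum_congr rfl fun b _ => Finset.sum_congr rfl fun b' _ => ?_
    by_cases h : A b b' = 0
    · simp [h]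
    · obtain ⟨hb, hb'⟩ := hA b b' h
      simp [Set.indicator_of_mem hb, Set.indicator_of_mem hb']
  calc _ = ‖⟪fs, toEuclideanCLM (𝕜 := 𝕜) A fs'⟫_𝕜‖ := congrArg norm hrestrict
    _ ≤ ‖fs‖ * ‖toEuclideanCLM (𝕜 := 𝕜) A fs'‖ := norm_inner_le_norm _ _
    _ ≤ ‖fs‖ * (‖toEuclideanCLM (𝕜 := 𝕜) A‖ * ‖fs'‖) := by
        gcongr; exact ContinuousLinearMap.le_opNorm _ _
    _ = _ := by ring

end Matrix

theorem EuclideanSpace.sum_norm_sq_indicator_fiber {𝕜 V B : Type*} [RCLike 𝕜] [Fintype V]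
    [Fintype B] (π : B → V) (f : B → 𝕜) :
    ∑ v, ‖WithLp.toLp 2 ((π ⁻¹' {v}).indicator f)‖ ^ 2 = ‖WithLp.toLp 2 f‖ ^ 2 := by
  simp only [EuclideanSpace.norm_sq_eq]
  rw [Finset.sum_comm]
  refine Finset.sum_congr rfl fun b _ => ?_
  rw [Finset.sum_eq_single (π b)]
  · simp
  · intro v _ hv
    simp [Set.indicator_of_notMem (show b ∉ π ⁻¹' {v} from Ne.symm hv)]
  · simp

noncomputable def transAdj {V B : Type} [DecidableEq V] (G : DGraph V)
    (P : G.E → Matrix B B ℂ) : Matrix B B ℂ :=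
  ∑ e, (G.edgeWeight e : ℂ) • P e

theorem transAdj_conjTranspose_sub {V B : Type} [DecidableEq V] (G : DGraph V)
    (P : G.E → Matrix B B ℂ) :
    (transAdj G P)ᴴ - transAdj G P = ∑ e, (G.edgeWeight e : ℂ) • ((P e)ᴴ - P (G.op e)) := by
  have hop : transAdj G P = ∑ e, (G.edgeWeight e : ℂ) • P (G.op e) := by
    rw [transAdj, ← G.sum_comp_op]
    simp only [G.edgeWeight_op]
  nth_rewrite 2 [hop]
  rw [transAdj]
  simp only [conjTranspose_sum, conjTranspose_smul, Complex.star_def, Complex.conj_ofReal,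
    smul_sub, Finset.sum_sub_distrib]

namespace IsTransmission

variable {V B : Type} {G : DGraph V} {π : B → V} {P : G.E → Matrix B B ℂ}

theorem apply_eq_zero (hP : IsTransmission G π P) {e : G.E} {b : B} (hb : π b ≠ G.t e)
    (b' : B) : P e b b' = 0 :=
  not_not.1 fun h => hb (hP e b b' h).1

theorem conjTranspose_sub_op_support (hP : IsTransmission G π P) (e : G.E) (b b' : B)
    (h : ((P e)ᴴ - P (G.op e)) b b' ≠ 0) : b ∈ π ⁻¹' {G.i e} ∧ b' ∈ π ⁻¹' {G.t e} := by
  by_cases hP' : P e b' b = 0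
  · have hop : P (G.op e) b b' ≠ 0 := by
      simpa [hP'] using h
    simpa [G.t_op, G.i_op] using hP _ _ _ hop
  · exact (hP e b' b hP').symm

theorem transLap_eq [DecidableEq V] [Fintype B] (hP : IsTransmission G π P) (f : B → ℂ) :
    transLap G π P f = f - transAdj G P *ᵥ f := by
  funext b
  simp only [transLap, Pi.sub_apply, transAdj, sum_mulVec, smul_mulVec, Finset.sum_apply,
    Pi.smul_apply, smul_eq_mul]
  congr 1
  calc _ = ∑ e ∈ Finset.univ.filter (fun e => G.t e = π b), (G.edgeWeight e : ℂ) * (P e *ᵥ f) b :=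
        Finset.sum_congr rfl fun e he => by
          rw [DGraph.edgeWeight, (Finset.mem_filter.1 he).2, Complex.ofReal_inv]; rfl
    _ = _ := Finset.sum_filter_of_ne fun e _ he => by
        by_contra hb
        exact he (by simp [mulVec, dotProduct, hP.apply_eq_zero (Ne.symm hb)])

theorem norm_inner_transAdj_skew_le [Fintype V] [DecidableEq V] [Fintype B] [DecidableEq B]
    (hP : IsTransmission G π P) (f : B → ℂ) :
    ‖⟪WithLp.toLp 2 f,
        toEuclideanCLM (𝕜 := ℂ) ((transAdj G P)ᴴ - transAdj G P) (WithLp.toLp 2 f)⟫_ℂ‖ ≤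
      (⨆ e, ‖toEuclideanCLM (𝕜 := ℂ) ((P e)ᴴ - P (G.op e))‖) * ‖WithLp.toLp 2 f‖ ^ 2 := by
  set N : G.E → ℝ := fun e => ‖toEuclideanCLM (𝕜 := ℂ) ((P e)ᴴ - P (G.op e))‖
  set a : V → ℝ := fun v => ‖WithLp.toLp 2 ((π ⁻¹' {v}).indicator f)‖
  have hN : ∀ e, N e ≤ ⨆ e, N e := le_ciSup (Set.finite_range N).bddAbove
  rw [transAdj_conjTranspose_sub, map_sum, ← EuclideanSpace.sum_norm_sq_indicator_fiber π f]
  calc _ ≤ ∑ e, G.edgeWeight e * (N e * (a (G.i e) * a (G.t e))) := by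
        rw [_root_.sum_apply, inner_sum]
        refine (norm_sum_le _ _).trans (Finset.sum_le_sum fun e _ => ?_)
        rw [map_smul, _root_.smul_apply, inner_smul_right, norm_mul,
          Complex.norm_real, Real.norm_of_nonneg (G.edgeWeight_nonneg e)]
        gcongr
        · exact G.edgeWeight_nonneg e
        · exact norm_inner_toEuclideanCLM_le_of_support _ (hP.conjTranspose_sub_op_support e) f
    _ ≤ ∑ e, (⨆ e, N e) * (G.edgeWeight e * (a (G.i e) * a (G.t e))) := by
        refine Finset.sum_le_sum fun e _ => ?_
        rw [mul_left_comm]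
        gcongr
        · exact mul_nonneg (G.edgeWeight_nonneg e) (by positivity)
        · exact hN e
    _ ≤ (⨆ e, N e) * ∑ v, a v ^ 2 := by
        rw [← Finset.mul_sum]
        gcongr
        · exact Real.iSup_nonneg fun e => norm_nonneg _
        · exact G.sum_edgeWeight_mul_le a

end IsTransmission

theorem transLap_eigenvalue_im_le_general {V B : Type} [Fintype V] [DecidableEq V]
    [Fintype B] [DecidableEq B]
    (G : DGraph V) (π : B → V) (P : G.E → Matrix B B ℂ)
    (hP : IsTransmission G π P)
    (lam : ℂ) (f : B → ℂ) (hf : f ≠ 0)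
    (heig : transLap G π P f = lam • f) :
    |lam.im| ≤ (1/2) * ⨆ e : G.E, ‖Matrix.toEuclideanCLM (𝕜 := ℂ) ((P e)ᴴ - P (G.op e))‖ := by
  set x := WithLp.toLp 2 f
  set T := toEuclideanCLM (𝕜 := ℂ) (transAdj G P)
  have hx : 0 < ‖x‖ ^ 2 := by
    have : x ≠ 0 := fun h => hf (congrArg WithLp.ofLp h)
    positivity
  have hTx : T x = (1 - lam) • x := by
    rw [hP.transLap_eq, sub_eq_iff_eq_add, ← sub_eq_iff_eq_add'] at heig
    simp only [T, x, toEuclideanCLM_toLp, ← heig, sub_smul, one_smul, WithLp.toLp_sub,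
      WithLp.toLp_smul]
  have him : (⟪x, T x⟫_ℂ).im = -lam.im * ‖x‖ ^ 2 := by
    rw [hTx, inner_smul_right, inner_self_eq_norm_sq_to_K]
    simp [← Complex.ofReal_pow]
  have key := hP.norm_inner_transAdj_skew_le f
  rw [map_sub, toEuclideanCLM_conjTranspose, ContinuousLinearMap.norm_inner_adjoint_sub_self,
    him, abs_mul, abs_neg, abs_of_pos hx, ← mul_assoc] at key
  linarith [le_of_mul_le_mul_right key hx]

/-- If λ is an eigenvalue of the transmission graph Laplacian Δ^P then
|Im λ| ≤ (1/2) · max over directed edges of ‖P(e)* - P(op(e))‖. -/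
theorem transLap_eigenvalue_im_le {V B : Type} [Fintype V] [DecidableEq V]
    [Fintype B] [DecidableEq B]
    (G : DGraph V) (π : B → V) (P : G.E → Matrix B B ℂ)
    (hP : IsTransmission G π P) (hdeg : ∀ v, 0 < G.deg v)
    (lam : ℂ) (f : B → ℂ) (hf : f ≠ 0)
    (heig : transLap G π P f = lam • f) :
    |lam.im| ≤ (1/2) * ⨆ e : G.E, ‖Matrix.toEuclideanCLM (𝕜 := ℂ) ((P e)ᴴ - P (G.op e))‖ :=
  transLap_eigenvalue_im_le_general G π P hP lam f hf heig
end

section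
/- If P is a strictly unitary transmission system (Hermitian symmetric and invertible, so each P(e⃗) is unitary), then all eigenvalues of the transmission graph Laplacian Δ^P are real and lie in the interval [0, 2]. -/
open Finset Matrix

/-- If P is a strictly unitary transmission system ((Hermitian) symmetric and
invertible, so each P(e) is unitary as a map between the data banks), then all
eigenvalues of the transmission graph Laplacian Δ^P are real and lie in [0,2]. -/
theorem transLap_eigenvalue_real_mem_Icc {V B : Type} [Fintype V] [DecidableEq V]
    [Fintype B] [DecidableEq B]
    (G : DGraph V) (π : B → V) (P : G.E → Matrix B B ℂ)
    (hP : IsTransmission G π P) (hdeg : ∀ v, 0 < G.deg v)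
    (hherm : ∀ e, P (G.op e) = (P e)ᴴ)
    (hunit : ∀ e, P (G.op e) * P e =
      Matrix.of (fun b b' => if b = b' ∧ π b = G.i e then (1:ℂ) else 0))
    (lam : ℂ) (f : B → ℂ) (hf : f ≠ 0)
    (heig : transLap G π P f = lam • f) :
    lam.im = 0 ∧ 0 ≤ lam.re ∧ lam.re ≤ 2 := by
  classical
  set c : G.E → ℝ := fun e => (Real.sqrt ((G.deg (G.t e) : ℝ) * (G.deg (G.i e) : ℝ)))⁻¹
    with hc
  set Pf : G.E → B → ℂ := fun e b => ∑ b', P e b b' * f b' with hPfdef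
  set Mf : B → ℂ := fun b => ∑ e, (c e : ℂ) * Pf e b with hMfdef
  have hop : Function.Involutive G.op := G.op_op
  -- vanishing off the block
  have hvan : ∀ e b, π b ≠ G.t e → Pf e b = 0 := by
    intro e b hb
    simp only [hPfdef]
    apply Finset.sum_eq_zero
    intro b' _
    by_cases h : P e b b' = 0
    · simp [h]
    · exact absurd ((hP e b b' h).1) hb
  have hcop : ∀ e, c (G.op e) = c e := by
    intro e; rw [hc]; simp only [G.i_op, G.t_op]; rw [mul_comm]
  have hconjP : ∀ e b b', (starRingEnd ℂ) (P e b b') = P (G.op e) b' b := by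
    intro e b b'; rw [hherm e, Matrix.conjTranspose_apply]; rfl
  -- eigen equation rewritten
  have hMeig : ∀ b, Mf b = (1 - lam) * f b := by
    intro b
    have h1 : transLap G π P f b = lam * f b := by rw [heig]; simp
    have h2 : transLap G π P f b = f b - Mf b := by
      unfold transLap
      congr 1
      simp only [hMfdef]
      rw [Finset.sum_filter]
      apply Finset.sum_congr rfl
      intro e _
      by_cases h : G.t e = π b
      · rw [if_pos h]
        simp only [hPfdef, hc]
        rw [← h]
        push_cast
        ring
      · rw [if_neg h, hvan e b (fun hh => h hh.symm), mul_zero]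
    have h3 : f b - Mf b = lam * f b := by rw [← h2, h1]
    linear_combination -h3
  -- norms
  set N : ℝ := ∑ b, Complex.normSq (f b) with hN
  have hNpos : 0 < N := by
    have : ∃ b, f b ≠ 0 := by
      by_contra h; push_neg at h; exact hf (funext h)
    obtain ⟨b0, hb0⟩ := this
    rw [hN]
    exact Finset.sum_pos' (fun b _ => Complex.normSq_nonneg _)
      ⟨b0, Finset.mem_univ _, Complex.normSq_pos.mpr hb0⟩
  have hNC : (N : ℂ) = ∑ b, (starRingEnd ℂ) (f b) * f b := by
    rw [hN]
    push_cast
    exact Finset.sum_congr rfl fun b _ => by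
      rw [mul_comm, Complex.mul_conj]
  set Q : ℂ := ∑ b, (starRingEnd ℂ) (f b) * Mf b with hQdef
  have hQval : Q = (1 - lam) * (N : ℂ) := by
    rw [hQdef, hNC, Finset.mul_sum]
    exact Finset.sum_congr rfl fun b _ => by rw [hMeig b]; ring
  -- Q as a triple sum
  have hQ3 : Q = ∑ e, ∑ b, ∑ b', (c e : ℂ) * ((starRingEnd ℂ) (f b) * (P e b b' * f b')) := by
    rw [hQdef]
    simp only [hMfdef, hPfdef, Finset.mul_sum]
    rw [Finset.sum_comm]
    exact Finset.sum_congr rfl fun e _ => Finset.sum_congr rfl fun b _ =>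
      Finset.sum_congr rfl fun b' _ => by ring
  -- Q is real
  have hQconj : (starRingEnd ℂ) Q = Q := by
    calc (starRingEnd ℂ) Q = ∑ e, ∑ b, ∑ b', (c (G.op e) : ℂ) *
        ((starRingEnd ℂ) (f b) * (P (G.op e) b b' * f b')) := by
          rw [hQ3, map_sum]
          apply Finset.sum_congr rfl
          intro e _
          calc (starRingEnd ℂ) (∑ b, ∑ b', (c e : ℂ) * ((starRingEnd ℂ) (f b) * (P e b b' * f b')))
              = ∑ b, ∑ b', (c e : ℂ) * (f b * (P (G.op e) b' b * (starRingEnd ℂ) (f b'))) := by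
                simp only [map_sum, _root_.map_mul, Complex.conj_conj, Complex.conj_ofReal, hconjP]
            _ = ∑ b, ∑ b', (c (G.op e) : ℂ) * ((starRingEnd ℂ) (f b) * (P (G.op e) b b' * f b')) := by
                rw [Finset.sum_comm, hcop e]
                exact Finset.sum_congr rfl fun b _ => Finset.sum_congr rfl fun b' _ => by ring
      _ = ∑ e, ∑ b, ∑ b', (c e : ℂ) * ((starRingEnd ℂ) (f b) * (P e b b' * f b')) :=
          Fintype.sum_bijective G.op hop.bijective _ _ (fun e => rfl)
      _ = Q := hQ3.symm
  have hQim : Q.im = 0 := Complex.conj_eq_iff_im.mp hQconj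
  -- unitarity: columns are orthonormal within blocks
  have hcol : ∀ e b'' b', (∑ b, (starRingEnd ℂ) (P e b b'') * P e b b') =
      if b'' = b' ∧ π b'' = G.i e then 1 else 0 := by
    intro e b'' b'
    have h := congrFun (congrFun (hunit e) b'') b'
    rw [Matrix.mul_apply] at h
    simp only [hherm e, Matrix.conjTranspose_apply, Matrix.of_apply] at h
    exact h
  -- norm preservation of P e
  have hKfC : ∀ e, ∑ b, ((starRingEnd ℂ) (Pf e b) * Pf e b) =
      ∑ b' ∈ Finset.univ.filter (fun b' => π b' = G.i e), (starRingEnd ℂ) (f b') * f b' := by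
    intro e
    calc ∑ b, (starRingEnd ℂ) (Pf e b) * Pf e b
        = ∑ b, ∑ b'', ∑ b', ((starRingEnd ℂ) (f b'') * f b') * ((starRingEnd ℂ) (P e b b'') * P e b b') := by
          apply Finset.sum_congr rfl
          intro b _
          simp only [hPfdef]
          rw [map_sum, Finset.sum_mul_sum]
          exact Finset.sum_congr rfl fun b'' _ => Finset.sum_congr rfl fun b' _ => by
            rw [_root_.map_mul]; ring
      _ = ∑ b'', ∑ b', ((starRingEnd ℂ) (f b'') * f b') * ∑ b, ((starRingEnd ℂ) (P e b b'') * P e b b') := by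
          rw [Finset.sum_comm]
          apply Finset.sum_congr rfl
          intro b'' _
          rw [Finset.sum_comm]
          exact Finset.sum_congr rfl fun b' _ => by rw [← Finset.mul_sum]
      _ = ∑ b'', ∑ b', ((starRingEnd ℂ) (f b'') * f b') *
            (if b'' = b' ∧ π b'' = G.i e then 1 else 0) := by
          simp only [hcol]
      _ = ∑ b'', (if π b'' = G.i e then (starRingEnd ℂ) (f b'') * f b'' else 0) := by
          apply Finset.sum_congr rfl
          intro b'' _
          rw [Finset.sum_eq_single b'']
          · by_cases h : π b'' = G.i e <;> simp [h]
          · intro b' _ hne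
            rw [if_neg (fun h => hne h.1.symm), mul_zero]
          · intro h; exact absurd (Finset.mem_univ b'') h
      _ = ∑ b' ∈ Finset.univ.filter (fun b' => π b' = G.i e), (starRingEnd ℂ) (f b') * f b' :=
          (Finset.sum_filter _ _).symm
  have hKf : ∀ e, ∑ b, Complex.normSq (Pf e b) =
      ∑ b' ∈ Finset.univ.filter (fun b' => π b' = G.i e), Complex.normSq (f b') := by
    intro e
    have hcc : ∀ z : ℂ, (starRingEnd ℂ) z * z = (Complex.normSq z : ℂ) := fun z => by
      rw [mul_comm, Complex.mul_conj]
    have h := hKfC e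
    simp only [hcc] at h
    exact_mod_cast h
  -- degree counting
  have hcount : ∀ (g : V → ℝ),
      ∑ e : G.E, ((G.deg (G.t e) : ℝ))⁻¹ * g (G.t e) = ∑ v, g v := by
    intro g
    rw [← Finset.sum_fiberwise Finset.univ G.t
      (fun e => ((G.deg (G.t e) : ℝ))⁻¹ * g (G.t e))]
    apply Finset.sum_congr rfl
    intro v _
    have h1 : ∀ e ∈ Finset.univ.filter (fun e => G.t e = v),
        ((G.deg (G.t e) : ℝ))⁻¹ * g (G.t e) = ((G.deg v : ℝ))⁻¹ * g v := by
      intro e he; rw [(Finset.mem_filter.mp he).2]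
    rw [Finset.sum_congr rfl h1, Finset.sum_const, nsmul_eq_mul]
    have hcard : (((Finset.univ.filter (fun e => G.t e = v)).card : ℕ) : ℝ)
        = (G.deg v : ℝ) := by
      simp [DGraph.deg]
    rw [hcard, ← mul_assoc, mul_inv_cancel₀ (by exact_mod_cast (hdeg v).ne'), one_mul]
  have hcount_i : ∀ (g : V → ℝ),
      ∑ e : G.E, ((G.deg (G.i e) : ℝ))⁻¹ * g (G.i e) = ∑ v, g v := by
    intro g
    rw [← hcount g]
    exact Fintype.sum_bijective G.op hop.bijective _ _ (fun e => by rw [G.t_op])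
  -- fiberwise sum of |f|^2
  have hSsum : ∑ v, ∑ b ∈ Finset.univ.filter (fun b => π b = v), Complex.normSq (f b)
      = N := by
    rw [hN]; exact Finset.sum_fiberwise Finset.univ π _
  -- the two vectors
  set a : G.E → B → ℂ := fun e b =>
    (((Real.sqrt (G.deg (G.t e) : ℝ)) : ℂ))⁻¹ * (if π b = G.t e then f b else 0) with hadef
  set h2 : G.E → B → ℂ := fun e b =>
    (((Real.sqrt (G.deg (G.i e) : ℝ)) : ℂ))⁻¹ * Pf e b with hhdef
  have key : ∀ (d : ℕ) (z : ℂ),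
      Complex.normSq (((Real.sqrt (d : ℝ) : ℝ) : ℂ)⁻¹ * z) = (d : ℝ)⁻¹ * Complex.normSq z := by
    intro d z
    rw [Complex.normSq_mul, Complex.normSq_inv, Complex.normSq_ofReal,
      Real.mul_self_sqrt (by positivity)]
  have hA : ∑ e, ∑ b, Complex.normSq (a e b) = N := by
    have h1 : ∀ e, ∑ b, Complex.normSq (a e b) = ((G.deg (G.t e) : ℝ))⁻¹ *
        ∑ b ∈ Finset.univ.filter (fun b => π b = G.t e), Complex.normSq (f b) := by
      intro e
      simp only [hadef, key]
      rw [← Finset.mul_sum]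
      congr 1
      rw [Finset.sum_filter]
      exact Finset.sum_congr rfl fun b _ => by
        by_cases h : π b = G.t e <;> simp [h]
    calc ∑ e, ∑ b, Complex.normSq (a e b)
        = ∑ e, ((G.deg (G.t e) : ℝ))⁻¹ *
            ∑ b ∈ Finset.univ.filter (fun b => π b = G.t e), Complex.normSq (f b) :=
          Finset.sum_congr rfl fun e _ => h1 e
      _ = N := by
          rw [hcount (fun v => ∑ b ∈ Finset.univ.filter (fun b => π b = v),
            Complex.normSq (f b))]
          exact hSsum
  have hB : ∑ e, ∑ b, Complex.normSq (h2 e b) = N := by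
    have h1 : ∀ e, ∑ b, Complex.normSq (h2 e b) = ((G.deg (G.i e) : ℝ))⁻¹ *
        ∑ b ∈ Finset.univ.filter (fun b => π b = G.i e), Complex.normSq (f b) := by
      intro e
      simp only [hhdef, key]
      rw [← Finset.mul_sum, hKf e]
    calc ∑ e, ∑ b, Complex.normSq (h2 e b)
        = ∑ e, ((G.deg (G.i e) : ℝ))⁻¹ *
            ∑ b ∈ Finset.univ.filter (fun b => π b = G.i e), Complex.normSq (f b) :=
          Finset.sum_congr rfl fun e _ => h1 e
      _ = N := by
          rw [hcount_i (fun v => ∑ b ∈ Finset.univ.filter (fun b => π b = v),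
            Complex.normSq (f b))]
          exact hSsum
  -- cross term
  have hcsplit : ∀ e, (c e : ℂ) = (((Real.sqrt (G.deg (G.t e) : ℝ)) : ℂ))⁻¹ *
      (((Real.sqrt (G.deg (G.i e) : ℝ)) : ℂ))⁻¹ := by
    intro e
    simp only [hc]
    rw [Real.sqrt_mul (by positivity)]
    push_cast
    ring
  have hCconj : (starRingEnd ℂ) (∑ e, ∑ b, a e b * (starRingEnd ℂ) (h2 e b)) = Q := by
    rw [map_sum]
    have hterm : ∀ e b, (starRingEnd ℂ) (a e b * (starRingEnd ℂ) (h2 e b)) = (c e : ℂ) * ((starRingEnd ℂ) (f b) * Pf e b) := by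
      intro e b
      simp only [hadef, hhdef]
      simp only [_root_.map_mul, Complex.conj_conj, map_inv₀, Complex.conj_ofReal]
      by_cases hb : π b = G.t e
      · rw [if_pos hb, hcsplit e]
        ring
      · rw [if_neg hb, hvan e b hb]
        simp
    calc ∑ e, (starRingEnd ℂ) (∑ b, a e b * (starRingEnd ℂ) (h2 e b))
        = ∑ e, ∑ b, (c e : ℂ) * ((starRingEnd ℂ) (f b) * Pf e b) := by
          apply Finset.sum_congr rfl
          intro e _
          rw [map_sum]
          exact Finset.sum_congr rfl fun b _ => hterm e b
      _ = Q := by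
          rw [hQdef, Finset.sum_comm]
          apply Finset.sum_congr rfl
          intro b _
          simp only [hMfdef]
          rw [Finset.mul_sum]
          exact Finset.sum_congr rfl fun e _ => by ring
  have hCval : (∑ e, ∑ b, a e b * (starRingEnd ℂ) (h2 e b)) = Q := by
    have h := congrArg (starRingEnd ℂ) hCconj
    rwa [Complex.conj_conj, hQconj] at h
  have hCre : ∑ e, ∑ b, (a e b * (starRingEnd ℂ) (h2 e b)).re = Q.re := by
    have h1 := congrArg Complex.re hCval
    simp only [Complex.re_sum] at h1
    exact h1
  have hplus : (0:ℝ) ≤ 2 * N - 2 * Q.re := by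
    have h0 : (0:ℝ) ≤ ∑ e, ∑ b, Complex.normSq (a e b - h2 e b) :=
      Finset.sum_nonneg fun e _ => Finset.sum_nonneg fun b _ => Complex.normSq_nonneg _
    have hexp : ∑ e, ∑ b, Complex.normSq (a e b - h2 e b) = 2*N - 2*Q.re := by
      simp only [Complex.normSq_sub]
      simp only [Finset.sum_sub_distrib, Finset.sum_add_distrib, ← Finset.mul_sum]
      rw [hA, hB, hCre]
      ring
    linarith [hexp ▸ h0]
  have hminus : (0:ℝ) ≤ 2 * N + 2 * Q.re := by
    have h0 : (0:ℝ) ≤ ∑ e, ∑ b, Complex.normSq (a e b + h2 e b) :=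
      Finset.sum_nonneg fun e _ => Finset.sum_nonneg fun b _ => Complex.normSq_nonneg _
    have hexp : ∑ e, ∑ b, Complex.normSq (a e b + h2 e b) = 2*N + 2*Q.re := by
      simp only [Complex.normSq_add]
      simp only [Finset.sum_add_distrib, ← Finset.mul_sum]
      rw [hA, hB, hCre]
      ring
    linarith [hexp ▸ h0]
  have hQimval : Q.im = -(lam.im) * N := by
    rw [hQval]
    simp [Complex.mul_im, Complex.sub_im, Complex.sub_re, Complex.ofReal_im,
      Complex.ofReal_re, Complex.one_im, Complex.one_re]
  have him : lam.im = 0 := by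
    have h0 : -(lam.im) * N = 0 := by rw [← hQimval, hQim]
    rcases mul_eq_zero.mp h0 with h1 | h1
    · exact neg_eq_zero.mp h1
    · exact absurd h1 hNpos.ne'
  have hre : Q.re = (1 - lam.re) * N := by
    rw [hQval]
    simp [Complex.mul_re, Complex.sub_re, Complex.sub_im, Complex.ofReal_im,
      Complex.ofReal_re, Complex.one_re, Complex.one_im]
  refine ⟨him, ?_, ?_⟩ <;> nlinarith [hplus, hminus, hre, hNpos]
end

section
/- For a graph X with an association A, the 0-cochain Φ defined by Φ(a)(v) = √(N(a,v)) for v ∈ A(a) lies in the kernel of the association transmission Laplacian Δ; i.e., 0 is an eigenvalue of Δ with this explicit eigenvector. -/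
open Finset

/-- `N(a,v)`: the number of vertices `b` adjacent to `a` in `X` such that `v`
is an associate of `b`, i.e. `v ∈ 𝒜(b)`. -/
def assocN {V : Type} [Fintype V] [DecidableEq V] (X : SimpleGraph V)
    [DecidableRel X.Adj] (As : V → Finset V) (a v : V) : ℕ :=
  (Finset.univ.filter (fun b => X.Adj a b ∧ v ∈ As b)).card

/-- The association transmission Laplacian, acting on 0-cochains
`K` with `K a ∈ F(𝒜(a))` (represented as functions `V → V → ℝ` supported so
that `K a v` matters only for `v ∈ 𝒜(a)`):
`(ΔK)(b)(z) = K(b)(z) - Σ_{a ∼ b, z ∈ 𝒜(a)} K(a)(z)/√(N(a,z) N(b,z))`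
for `z ∈ 𝒜(b)`, and `0` otherwise. -/
noncomputable def assocLap {V : Type} [Fintype V] [DecidableEq V]
    (X : SimpleGraph V) [DecidableRel X.Adj] (As : V → Finset V)
    (K : V → V → ℝ) : V → V → ℝ := fun b z =>
  if z ∈ As b then
    K b z - ∑ a ∈ Finset.univ.filter (fun a => X.Adj a b ∧ z ∈ As a),
      K a z / Real.sqrt ((assocN X As a z : ℝ) * (assocN X As b z : ℝ))
  else 0

/-- The 0-cochain `Φ(a)(v) = √(N(a,v))` for `v ∈ 𝒜(a)`. -/
noncomputable def assocPhi {V : Type} [Fintype V] [DecidableEq V]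
    (X : SimpleGraph V) [DecidableRel X.Adj] (As : V → Finset V) :
    V → V → ℝ := fun a v =>
  if v ∈ As a then Real.sqrt (assocN X As a v) else 0

/-- The 0-cochain `Φ(a)(v) = √(N(a,v))` lies in the kernel of the association
transmission Laplacian: `0` is an eigenvalue of `Δ` with eigenvector `Φ`. -/
theorem assocLap_phi_eq_zero {V : Type} [Fintype V] [DecidableEq V]
    (X : SimpleGraph V) [DecidableRel X.Adj] (As : V → Finset V) :
    assocLap X As (assocPhi X As) = 0 := by
  funext b z
  simp only [assocLap, assocPhi, Pi.zero_apply]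
  split
  · rename_i hz
    set S := Finset.univ.filter (fun a => X.Adj a b ∧ z ∈ As a) with hS
    have hcard : (S.card : ℝ) = (assocN X As b z : ℝ) := by
      norm_cast
      simp only [assocN, hS]
      congr 1
      ext a
      simp [X.adj_comm]
    have hterm : ∀ a ∈ S,
        (if z ∈ As a then Real.sqrt (assocN X As a z) else 0) /
          Real.sqrt ((assocN X As a z : ℝ) * (assocN X As b z : ℝ)) =
        1 / Real.sqrt (assocN X As b z) := by
      intro a ha
      simp only [hS, mem_filter, mem_univ, true_and] at ha
      have hNa : 0 < assocN X As a z := by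
        apply Finset.card_pos.2
        exact ⟨b, by simp [ha.1, hz]⟩
      rw [if_pos ha.2, Real.sqrt_mul (by positivity)]
      have h1 : Real.sqrt (assocN X As a z) ≠ 0 := by positivity
      rw [← div_div, div_self h1]
    rw [Finset.sum_congr rfl hterm, Finset.sum_const, nsmul_eq_mul, mul_one_div,
      hcard, Real.div_sqrt, sub_self]
  · rfl
end

section
/- The association transmission Laplacian Δ of a graph X with association A is self-adjoint with respect to the natural real inner product, and all of its eigenvalues lie in the interval [0, 2]. -/
open Finset

/-!
Write `⟨ΔK, L⟩ = ⟨K, L⟩ - B(K, L)`, where `B` sums `K(a)(z) L(b)(z) / √(N(a,z) N(b,z))` over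
adjacent `a, b` with `z ∈ 𝒜(a) ∩ 𝒜(b)`. Self-adjointness is the symmetry of `B` under `a ↔ b`.
For an eigencochain, `μ ⟨K, K⟩ = ⟨K, K⟩ - B(K, K)`; expanding `Σ (f a ± f b)² ≥ 0` with
`f a = K(a)(z) / √N(a,z)` gives `|B(K, K)| ≤ Σ_{a, z} N(a,z) f(a)² ≤ ⟨K, K⟩`, hence `μ ∈ [0, 2]`.
-/

lemma abs_sum_ite_mul_le_sum_ite_sq {ι : Type*} [Fintype ι] (R : ι → ι → Prop)
    [DecidableRel R] (hR : ∀ i j, R i j → R j i) (f : ι → ℝ) :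
    |∑ i, ∑ j, if R i j then f i * f j else 0| ≤ ∑ i, ∑ j, if R i j then f i ^ 2 else 0 := by
  set S := ∑ i, ∑ j, if R i j then f i ^ 2 else 0
  set P := ∑ i, ∑ j, if R i j then f i * f j else 0
  have swap : ∑ i, ∑ j, (if R i j then f j ^ 2 else 0) = S := by
    rw [sum_comm]
    refine sum_congr rfl fun i _ => sum_congr rfl fun j _ => ?_
    simp only [show R j i ↔ R i j from ⟨hR j i, hR i j⟩]
  have sum_sq_nonneg : ∀ ε : ℝ, ε ^ 2 = 1 → 0 ≤ S + S + 2 * ε * P := by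
    intro ε hε
    nth_rewrite 2 [← swap]
    calc 0 ≤ ∑ i, ∑ j, (if R i j then (f i + ε * f j) ^ 2 else 0) :=
          sum_nonneg fun i _ => sum_nonneg fun j _ => by split_ifs <;> positivity
      _ = S + ∑ i, ∑ j, (if R i j then f j ^ 2 else 0) + 2 * ε * P := by
        simp only [S, P, mul_sum, ← sum_add_distrib]
        refine sum_congr rfl fun i _ => sum_congr rfl fun j _ => ?_
        split_ifs
        · linear_combination f j ^ 2 * hε
        · ring
  rw [abs_le]
  constructor <;> linarith [sum_sq_nonneg 1 (by norm_num), sum_sq_nonneg (-1) (by norm_num)]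

lemma mul_div_sqrt_sq_le (n x : ℝ) : n * (x / √n) ^ 2 ≤ x ^ 2 := by
  rcases le_or_gt n 0 with hn | hn
  · rw [Real.sqrt_eq_zero'.mpr hn, div_zero]
    simp [sq_nonneg]
  · rw [div_pow, Real.sq_sqrt hn.le, mul_div_cancel₀ _ hn.ne']

section

variable {V : Type} [Fintype V]

noncomputable def assocInner (As : V → Finset V) (K L : V → V → ℝ) : ℝ :=
  ∑ a, ∑ v ∈ As a, K a v * L a v

lemma assocInner_comm (As : V → Finset V) (K L : V → V → ℝ) :
    assocInner As K L = assocInner As L K := by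
  simp only [assocInner, mul_comm]

lemma assocInner_self_pos (As : V → Finset V) {K : V → V → ℝ}
    (hK : ∀ a v, v ∉ As a → K a v = 0) (hK0 : K ≠ 0) :
    0 < assocInner As K K := by
  obtain ⟨a, v, hav⟩ : ∃ a v, K a v ≠ 0 := by
    by_contra! h
    exact hK0 (funext₂ h)
  have hv : v ∈ As a := by
    by_contra hv
    exact hav (hK a v hv)
  calc 0 < K a v * K a v := mul_self_pos.mpr hav
    _ ≤ ∑ w ∈ As a, K a w * K a w :=
        single_le_sum (fun w _ => mul_self_nonneg (K a w)) hv
    _ ≤ assocInner As K K :=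
        single_le_sum (f := fun b => ∑ w ∈ As b, K b w * K b w)
          (fun b _ => sum_nonneg fun w _ => mul_self_nonneg (K b w)) (mem_univ a)

variable [DecidableEq V] (X : SimpleGraph V) [DecidableRel X.Adj] (As : V → Finset V)

noncomputable def assocTransForm (K L : V → V → ℝ) : ℝ :=
  ∑ z, ∑ a, ∑ b, if X.Adj a b ∧ z ∈ As a ∧ z ∈ As b then
    K a z * L b z / √((assocN X As a z : ℝ) * (assocN X As b z : ℝ)) else 0

lemma sum_sum_sum_filter_adj_eq_sum_ite (t : V → V → V → ℝ) :
    ∑ b, ∑ z ∈ As b, ∑ a ∈ univ.filter (fun a => X.Adj a b ∧ z ∈ As a), t a b z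
      = ∑ z, ∑ a, ∑ b, if X.Adj a b ∧ z ∈ As a ∧ z ∈ As b then t a b z else 0 := by
  calc _ = ∑ b, ∑ z, ∑ a, if X.Adj a b ∧ z ∈ As a ∧ z ∈ As b then t a b z else 0 := by
        refine sum_congr rfl fun b _ => ?_
        rw [← sum_ite_mem_eq]
        refine sum_congr rfl fun z _ => ?_
        rw [sum_filter]
        split_ifs with hz <;> simp [hz]
    _ = _ := by
        rw [sum_comm]
        exact sum_congr rfl fun z _ => sum_comm

lemma assocInner_assocLap (K L : V → V → ℝ) :
    assocInner As (assocLap X As K) L = assocInner As K L - assocTransForm X As K L := by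
  rw [assocInner, assocInner, assocTransForm, ← sum_sum_sum_filter_adj_eq_sum_ite,
    ← sum_sub_distrib]
  refine sum_congr rfl fun b _ => ?_
  rw [← sum_sub_distrib]
  refine sum_congr rfl fun z hz => ?_
  rw [assocLap, if_pos hz, sub_mul, sum_mul]
  simp only [div_mul_eq_mul_div]

lemma assocTransForm_comm (K L : V → V → ℝ) :
    assocTransForm X As K L = assocTransForm X As L K := by
  unfold assocTransForm
  refine sum_congr rfl fun z _ => ?_
  rw [sum_comm]
  refine sum_congr rfl fun a _ => sum_congr rfl fun b _ => ?_
  by_cases h : X.Adj a b ∧ z ∈ As a ∧ z ∈ As b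
  · rw [if_pos h, if_pos ⟨h.1.symm, h.2.2, h.2.1⟩, mul_comm (K b z),
      mul_comm (assocN X As b z : ℝ)]
  · rw [if_neg h, if_neg fun h' => h ⟨h'.1.symm, h'.2.2, h'.2.1⟩]

lemma sum_ite_sq_div_sqrt_assocN_le (a z : V) (x : ℝ) :
    ∑ b, (if X.Adj a b ∧ z ∈ As a ∧ z ∈ As b then (x / √(assocN X As a z : ℝ)) ^ 2 else 0)
      ≤ if z ∈ As a then x ^ 2 else 0 := by
  by_cases hz : z ∈ As a
  · simp only [hz, true_and, if_true]
    rw [← sum_filter, sum_const, nsmul_eq_mul]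
    exact mul_div_sqrt_sq_le _ x
  · simp [hz]

lemma abs_assocTransForm_self_le (K : V → V → ℝ) :
    |assocTransForm X As K K| ≤ assocInner As K K := by
  let f : V → V → ℝ := fun z a => K a z / √(assocN X As a z : ℝ)
  have hB : assocTransForm X As K K = ∑ z, ∑ a, ∑ b,
      if X.Adj a b ∧ z ∈ As a ∧ z ∈ As b then f z a * f z b else 0 := by
    refine sum_congr rfl fun z _ => sum_congr rfl fun a _ =>
      sum_congr rfl fun b _ => ?_
    rw [Real.sqrt_mul (Nat.cast_nonneg _), mul_div_mul_comm]
  calc |assocTransForm X As K K|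
      ≤ ∑ z, |∑ a, ∑ b, if X.Adj a b ∧ z ∈ As a ∧ z ∈ As b then f z a * f z b else 0| := by
        rw [hB]; exact abs_sum_le_sum_abs _ _
    _ ≤ ∑ z, ∑ a, ∑ b, if X.Adj a b ∧ z ∈ As a ∧ z ∈ As b then f z a ^ 2 else 0 :=
        sum_le_sum fun z _ => abs_sum_ite_mul_le_sum_ite_sq _
          (fun _ _ h => ⟨h.1.symm, h.2.2, h.2.1⟩) (f z)
    _ ≤ ∑ z, ∑ a, if z ∈ As a then K a z ^ 2 else 0 :=
        sum_le_sum fun z _ => sum_le_sum fun a _ =>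
          sum_ite_sq_div_sqrt_assocN_le X As a z (K a z)
    _ = assocInner As K K := by
        rw [sum_comm, assocInner]
        simp only [sum_ite_mem_eq, sq]

end

/-- The association transmission Laplacian is self-adjoint with respect to the
natural real inner product `⟨K,L⟩ = Σ_a Σ_{v ∈ 𝒜(a)} K(a)(v) L(a)(v)`, and all
its eigenvalues lie in `[0,2]`. -/
theorem assocLap_selfAdjoint_and_eigenvalues_mem_Icc {V : Type} [Fintype V]
    [DecidableEq V] (X : SimpleGraph V) [DecidableRel X.Adj]
    (As : V → Finset V) :
    (∀ K L : V → V → ℝ, (∀ a v, v ∉ As a → K a v = 0) →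
      (∀ a v, v ∉ As a → L a v = 0) →
      ∑ a, ∑ v ∈ As a, assocLap X As K a v * L a v =
        ∑ a, ∑ v ∈ As a, K a v * assocLap X As L a v) ∧
    (∀ (μ : ℝ) (K : V → V → ℝ), (∀ a v, v ∉ As a → K a v = 0) → K ≠ 0 →
      assocLap X As K = μ • K → 0 ≤ μ ∧ μ ≤ 2) := by
  refine ⟨fun K L _ _ => ?_, fun μ K hK hK0 hμ => ?_⟩
  · change assocInner As (assocLap X As K) L = assocInner As K (assocLap X As L)
    rw [assocInner_comm As K, assocInner_assocLap, assocInner_assocLap, assocInner_comm As K,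
      assocTransForm_comm]
  · have hpos := assocInner_self_pos As hK hK0
    have hbound := abs_le.mp (abs_assocTransForm_self_le X As K)
    have hrayleigh : μ * assocInner As K K = assocInner As K K - assocTransForm X As K K := by
      rw [← assocInner_assocLap, hμ]
      simp only [assocInner, mul_sum, Pi.smul_apply, smul_eq_mul, mul_assoc]
    constructor <;> nlinarith
end

section
/- If X is a finite connected k-regular simple graph (k ≥ 2), then its line graph X* is 2(k−1)-regular and the second smallest normalized Laplacian eigenvalues satisfy k·λ₂(X) = 2(k−1)·λ₂(X*). -/
open Finset Matrix

/-- The adjacency matrix of the dual (line) graph `X*`: two distinct edges of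
`X` are adjacent iff they share an endpoint. -/
noncomputable def dualAdj {V : Type} [Fintype V] [DecidableEq V]
    (G : SimpleGraph V) [DecidableRel G.Adj] :
    Matrix G.edgeFinset G.edgeFinset ℝ :=
  Matrix.of fun e f =>
    if e ≠ f ∧ ∃ v, v ∈ (e : Sym2 V) ∧ v ∈ (f : Sym2 V) then 1 else 0

/-!
Let `B` be the vertex–edge incidence matrix of `X`, and `A`, `A*` the adjacency matrices of `X`,
`X*`. Then `B Bᵀ = k + A` and `Bᵀ B = 2 + A*`, so the scaled Laplacians are `k - A = 2k - B Bᵀ`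
and `2(k-1) - A* = 2k - Bᵀ B`. For `μ ≠ 2k`, the maps `Bᵀ` and `B` carry `μ`-eigenvectors of
either matrix to `μ`-eigenvectors of the other, and keep the coordinate sum zero because the row
sums of `B` are `k` and its column sums are `2`. The value `2k` bounds both sets from above since
`B Bᵀ` and `Bᵀ B` are positive semidefinite; on the side of `X` it occurs only if `ker Bᵀ ≠ 0`,
and then `ker B ≠ 0` as well because `|E| = k|V|/2 ≥ |V|`. So the two sets differ at most in
their common upper bound `2k`, which does not affect the infimum.
-/
open scoped Pointwise

theorem csInf_eq_of_sdiff_singleton_eq {α : Type*} [ConditionallyCompleteLinearOrder α]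
    {s t : Set α} {a : α} (hs : BddBelow s) (hs' : s.Nonempty) (hle : ∀ x ∈ s, x ≤ a)
    (hst : s \ {a} = t \ {a}) (hat : a ∈ s → a ∈ t) : sInf s = sInf t := by
  by_cases ha : a ∈ t
  · have ht : t = insert a s := by
      rw [← Set.insert_sdiff_self_of_mem ha, ← hst, Set.insert_sdiff_singleton]
    obtain ⟨x, hx⟩ := hs'
    rw [ht, csInf_insert hs ⟨x, hx⟩, inf_eq_right.2 ((csInf_le hs hx).trans (hle x hx))]
  · rw [← Set.sdiff_singleton_eq_self (mt hat ha), hst, Set.sdiff_singleton_eq_self ha]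

namespace Matrix

theorem rank_lt_card_width_iff {m n K : Type*} [Fintype n] [Field K] (A : Matrix m n K) :
    A.rank < Fintype.card n ↔ ∃ v, v ≠ 0 ∧ A *ᵥ v = 0 := by
  have h := LinearMap.finrank_range_add_finrank_ker A.mulVecLin
  rw [Module.finrank_fintype_fun_eq_card] at h
  rw [Matrix.rank, ← h, lt_add_iff_pos_right, Module.finrank_pos_iff_exists_ne_zero]
  simp [and_comm]

theorem sum_transpose_mulVec {m n R : Type*} [Fintype m] [Fintype n] [CommSemiring R]
    {A : Matrix m n R} {a : R} (hA : ∀ i, ∑ j, A i j = a) (v : m → R) :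
    ∑ j, (Aᵀ *ᵥ v) j = a * ∑ i, v i := by
  simp only [mulVec, dotProduct, transpose_apply, Finset.mul_sum]
  rw [Finset.sum_comm]
  simp [← Finset.sum_mul, hA]

theorem smul_one_sub_mulVec_eq_smul_iff {n R : Type*} [Fintype n] [DecidableEq n] [CommRing R]
    (M : Matrix n n R) (c μ : R) (v : n → R) :
    (c • 1 - M) *ᵥ v = μ • v ↔ M *ᵥ v = (c - μ) • v := by
  rw [sub_mulVec, smul_mulVec, one_mulVec, sub_smul]
  constructor <;> intro h
  · rw [← h, sub_sub_cancel]
  · rw [h, sub_sub_cancel]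

theorem smul_of_one_sub_div {n : Type*} [DecidableEq n] (A : Matrix n n ℝ) {c : ℝ} (hc : c ≠ 0) :
    c • of (fun i j => (if i = j then (1 : ℝ) else 0) - A i j / c) = c • 1 - A := by
  ext i j
  simp only [smul_apply, of_apply, sub_apply, one_apply, smul_eq_mul]
  field_simp

section SumZeroSpectrum

variable {n : Type*} [Fintype n]

/-- Eigenvalues with an eigenvector orthogonal to the constants; for a Laplacian, the infimum of
this set is `λ₂`. -/
def sumZeroSpectrum (M : Matrix n n ℝ) : Set ℝ :=
  {μ | ∃ v : n → ℝ, v ≠ 0 ∧ M *ᵥ v = μ • v ∧ ∑ i, v i = 0}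

theorem sumZeroSpectrum_smul (M : Matrix n n ℝ) {c : ℝ} (hc : c ≠ 0) :
    sumZeroSpectrum (c • M) = c • sumZeroSpectrum M := by
  ext μ
  rw [Set.mem_smul_set_iff_inv_smul_mem₀ hc]
  refine exists_congr fun v => and_congr_right fun _ => and_congr_left fun _ => ?_
  rw [smul_mulVec, smul_eq_mul, mul_smul, eq_inv_smul_iff₀ hc]

theorem csInf_sumZeroSpectrum_smul (M : Matrix n n ℝ) {c : ℝ} (hc : 0 < c) :
    sInf (sumZeroSpectrum (c • M)) = c * sInf (sumZeroSpectrum M) := by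
  rw [sumZeroSpectrum_smul M hc.ne', Real.sInf_smul_of_nonneg hc.le, smul_eq_mul]

theorem sumZeroSpectrum_nonempty {M : Matrix n n ℝ} (hM : M.IsHermitian) (hM0 : M ≠ 0)
    (hM1 : M *ᵥ (fun _ => 1) = 0) : (sumZeroSpectrum M).Nonempty := by
  obtain ⟨v, t, ht, hv, hMv⟩ := hM.exists_eigenvector_of_ne_zero hM0
  refine ⟨t, v, hv, hMv, ?_⟩
  have h : t * ((fun _ => 1) ⬝ᵥ v) = 0 := by
    rw [← smul_eq_mul, ← dotProduct_smul, ← hMv, dotProduct_mulVec, ← mulVec_transpose,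
      ← conjTranspose_eq_transpose_of_trivial, hM.eq, hM1, zero_dotProduct]
  simpa [ht, dotProduct] using h

variable [DecidableEq n]

theorem sumZeroSpectrum_subset_spectrum (M : Matrix n n ℝ) :
    sumZeroSpectrum M ⊆ spectrum ℝ M := by
  rintro μ ⟨v, hv, hMv, -⟩
  rw [← spectrum_toLin']
  exact (Module.End.hasEigenvalue_of_hasEigenvector
    (Module.End.hasEigenvector_iff.2 ⟨Module.End.mem_eigenspace_iff.2 hMv, hv⟩)).mem_spectrum

theorem bddBelow_sumZeroSpectrum (M : Matrix n n ℝ) :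
    BddBelow (sumZeroSpectrum M) :=
  (M.finite_spectrum.subset (sumZeroSpectrum_subset_spectrum M)).bddBelow

end SumZeroSpectrum

variable {m n : Type*} [Fintype m] [Fintype n] [DecidableEq m]

theorem le_of_mem_sumZeroSpectrum_smul_one_sub_mul_transpose {B : Matrix m n ℝ} {c μ : ℝ}
    (hμ : μ ∈ sumZeroSpectrum (c • 1 - B * Bᵀ)) : μ ≤ c := by
  obtain ⟨v, hv, hBv, -⟩ := hμ
  rw [smul_one_sub_mulVec_eq_smul_iff] at hBv
  have h : (c - μ) * (v ⬝ᵥ v) = (Bᵀ *ᵥ v) ⬝ᵥ (Bᵀ *ᵥ v) := by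
    rw [← smul_eq_mul, ← dotProduct_smul, ← hBv, ← mulVec_mulVec, dotProduct_mulVec,
      ← mulVec_transpose]
  have hvv : 0 < v ⬝ᵥ v := by simpa using dotProduct_star_self_pos_iff.2 hv
  have hBv : 0 ≤ (Bᵀ *ᵥ v) ⬝ᵥ (Bᵀ *ᵥ v) := by simpa using dotProduct_star_self_nonneg (Bᵀ *ᵥ v)
  nlinarith

variable [DecidableEq n]

theorem mem_sumZeroSpectrum_smul_one_sub_transpose_mul {B : Matrix m n ℝ} {a c μ : ℝ}
    (hB : ∀ i, ∑ j, B i j = a) (hμ : μ ∈ sumZeroSpectrum (c • 1 - B * Bᵀ)) (hμc : μ ≠ c) :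
    μ ∈ sumZeroSpectrum (c • 1 - Bᵀ * B) := by
  obtain ⟨v, hv, hBv, hsum⟩ := hμ
  rw [smul_one_sub_mulVec_eq_smul_iff] at hBv
  refine ⟨Bᵀ *ᵥ v, fun h0 => hv ?_, ?_, by rw [sum_transpose_mulVec hB, hsum, mul_zero]⟩
  · rw [← mulVec_mulVec, h0, mulVec_zero, eq_comm, smul_eq_zero] at hBv
    exact hBv.resolve_left (sub_ne_zero.2 hμc.symm)
  · rw [smul_one_sub_mulVec_eq_smul_iff, mulVec_mulVec, Matrix.mul_assoc, ← mulVec_mulVec, hBv,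
      mulVec_smul]

theorem self_mem_sumZeroSpectrum_smul_one_sub_transpose_mul {B : Matrix m n ℝ} {b c : ℝ}
    (hB : ∀ j, ∑ i, B i j = b) (hb : b ≠ 0) (hcard : Fintype.card m ≤ Fintype.card n)
    (hc : c ∈ sumZeroSpectrum (c • 1 - B * Bᵀ)) : c ∈ sumZeroSpectrum (c • 1 - Bᵀ * B) := by
  obtain ⟨v, hv, hBv, -⟩ := hc
  rw [smul_one_sub_mulVec_eq_smul_iff, sub_self, zero_smul,
    ← conjTranspose_eq_transpose_of_trivial, self_mul_conjTranspose_mulVec_eq_zero,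
    conjTranspose_eq_transpose_of_trivial] at hBv
  have hrank : B.rank < Fintype.card n := by
    rw [← rank_transpose]
    exact ((rank_lt_card_width_iff Bᵀ).2 ⟨v, hv, hBv⟩).trans_le hcard
  obtain ⟨w, hw, hBw⟩ := (rank_lt_card_width_iff B).1 hrank
  refine ⟨w, hw, ?_, ?_⟩
  · rw [smul_one_sub_mulVec_eq_smul_iff, sub_self, zero_smul, ← mulVec_mulVec, hBw, mulVec_zero]
  · have h := sum_transpose_mulVec (A := Bᵀ) hB w
    rw [transpose_transpose, hBw] at h
    simpa [hb] using h.symm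

theorem csInf_sumZeroSpectrum_smul_one_sub_mul_transpose {B : Matrix m n ℝ} {a b c : ℝ}
    (hrow : ∀ i, ∑ j, B i j = a) (hcol : ∀ j, ∑ i, B i j = b) (hb : b ≠ 0)
    (hcard : Fintype.card m ≤ Fintype.card n)
    (hne : (sumZeroSpectrum (c • 1 - B * Bᵀ)).Nonempty) :
    sInf (sumZeroSpectrum (c • 1 - B * Bᵀ)) = sInf (sumZeroSpectrum (c • 1 - Bᵀ * B)) := by
  refine csInf_eq_of_sdiff_singleton_eq (bddBelow_sumZeroSpectrum _) hne
    (fun _ => le_of_mem_sumZeroSpectrum_smul_one_sub_mul_transpose) ?_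
    (self_mem_sumZeroSpectrum_smul_one_sub_transpose_mul hcol hb hcard)
  refine Set.ext fun μ => and_congr_left fun hμc => ⟨fun hμ => ?_, fun hμ => ?_⟩
  · exact mem_sumZeroSpectrum_smul_one_sub_transpose_mul hrow hμ hμc
  · simpa using mem_sumZeroSpectrum_smul_one_sub_transpose_mul (B := Bᵀ) hcol
      (by simpa using hμ) hμc

end Matrix

namespace SimpleGraph

variable {V : Type} [Fintype V] (G : SimpleGraph V) [DecidableRel G.Adj]

theorem sum_edgeFinset_eq_sum {M : Type*} [AddCommMonoid M] {f : Sym2 V → M}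
    (hf : ∀ e ∉ G.edgeSet, f e = 0) : ∑ e : G.edgeFinset, f e = ∑ e, f e := by
  rw [Finset.sum_coe_sort G.edgeFinset f]
  exact Finset.sum_subset (Finset.subset_univ _) fun e _ he => hf e (by simpa using he)

variable {G} {k : ℕ}

theorem IsRegularOfDegree.ne_bot [Nonempty V] (hreg : G.IsRegularOfDegree k) (hk : 0 < k) :
    G ≠ ⊥ := by
  obtain ⟨w, hw⟩ := G.degree_pos_iff_exists_adj (Classical.arbitrary V) |>.1 (hreg.degree_eq _ ▸ hk)
  exact ne_bot_iff_exists_adj.2 ⟨_, w, hw⟩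

theorem IsRegularOfDegree.card_le_card_edgeFinset (hreg : G.IsRegularOfDegree k) (hk : 2 ≤ k) :
    Fintype.card V ≤ Fintype.card G.edgeFinset := by
  have h := G.sum_degrees_eq_twice_card_edges
  simp only [hreg.degree_eq, Finset.sum_const, Finset.card_univ, smul_eq_mul] at h
  rw [Fintype.card_coe]
  nlinarith

variable (G) [DecidableEq V]

noncomputable def edgeIncMatrix : Matrix V G.edgeFinset ℝ :=
  (G.incMatrix ℝ).submatrix id (↑)

theorem edgeIncMatrix_apply (v : V) (e : G.edgeFinset) :
    G.edgeIncMatrix v e = if v ∈ (e : Sym2 V) then 1 else 0 := by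
  have he : (e : Sym2 V) ∈ G.edgeSet := G.mem_edgeFinset.1 e.2
  simp [edgeIncMatrix, incMatrix_apply', incidenceSet, he]

theorem sum_edgeIncMatrix_row (v : V) : ∑ e, G.edgeIncMatrix v e = G.degree v := by
  rw [← sum_incMatrix_apply]
  exact G.sum_edgeFinset_eq_sum (f := G.incMatrix ℝ v) fun e he =>
    G.incMatrix_of_notMem_incidenceSet fun h => he h.1

theorem sum_edgeIncMatrix_col (e : G.edgeFinset) : ∑ v, G.edgeIncMatrix v e = 2 :=
  G.sum_incMatrix_apply_of_mem_edgeSet (G.mem_edgeFinset.1 e.2)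

theorem edgeIncMatrix_mul_transpose :
    G.edgeIncMatrix * G.edgeIncMatrixᵀ = G.degMatrix ℝ + G.adjMatrix ℝ := by
  have h : G.edgeIncMatrix * G.edgeIncMatrixᵀ = G.incMatrix ℝ * (G.incMatrix ℝ)ᵀ := by
    ext v w
    exact G.sum_edgeFinset_eq_sum (f := fun e => G.incMatrix ℝ v e * G.incMatrix ℝ w e)
      fun e he => by rw [G.incMatrix_of_notMem_incidenceSet fun h => he h.1, zero_mul]
  rw [h, incMatrix_mul_transpose]
  ext v w
  by_cases hvw : v = w
  · subst hvw
    simp [degMatrix]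
  · simp [degMatrix, hvw]

theorem card_filter_mem_mem_of_ne {e f : G.edgeFinset} (hef : e ≠ f) :
    #{v | v ∈ (e : Sym2 V) ∧ v ∈ (f : Sym2 V)} =
      if ∃ v, v ∈ (e : Sym2 V) ∧ v ∈ (f : Sym2 V) then 1 else 0 := by
  split_ifs with h
  · obtain ⟨v, hv⟩ := h
    refine Finset.card_eq_one.2 ⟨v, Finset.eq_singleton_iff_unique_mem.2 ⟨by simpa using hv, ?_⟩⟩
    intro w hw
    by_contra hwv
    rw [Finset.mem_filter] at hw
    exact hef (Subtype.ext (((Sym2.mem_and_mem_iff hwv).1 ⟨hw.2.1, hv.1⟩).trans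
      ((Sym2.mem_and_mem_iff hwv).1 ⟨hw.2.2, hv.2⟩).symm))
  · exact Finset.card_eq_zero.2 (Finset.filter_eq_empty_iff.2 fun v _ hv => h ⟨v, hv⟩)

theorem edgeIncMatrix_transpose_mul :
    G.edgeIncMatrixᵀ * G.edgeIncMatrix = dualAdj G + (2 : ℝ) • 1 := by
  ext e f
  have h : (G.edgeIncMatrixᵀ * G.edgeIncMatrix) e f =
      #{v | v ∈ (e : Sym2 V) ∧ v ∈ (f : Sym2 V)} := by
    simp only [mul_apply, transpose_apply, edgeIncMatrix_apply, ite_zero_mul_ite_zero, one_mul,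
      Finset.sum_boole]
  rw [h]
  by_cases hef : e = f
  · subst hef
    simpa [dualAdj, edgeIncMatrix_apply, Finset.sum_boole] using G.sum_edgeIncMatrix_col e
  · rw [G.card_filter_mem_mem_of_ne hef]
    simp [dualAdj, hef]

theorem smul_one_sub_dualAdj (c : ℝ) :
    (2 * (c - 1)) • 1 - dualAdj G = (2 * c) • 1 - G.edgeIncMatrixᵀ * G.edgeIncMatrix := by
  rw [edgeIncMatrix_transpose_mul]
  module

theorem lapMatrix_ne_zero (hG : G ≠ ⊥) : G.lapMatrix ℝ ≠ 0 := by
  obtain ⟨v, w, hvw⟩ := ne_bot_iff_exists_adj.1 hG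
  intro h
  have := congrFun (congrFun h v) w
  simp [lapMatrix, degMatrix, hvw.ne, hvw] at this

theorem sumZeroSpectrum_lapMatrix_nonempty (hG : G ≠ ⊥) :
    (sumZeroSpectrum (G.lapMatrix ℝ)).Nonempty :=
  sumZeroSpectrum_nonempty (G.isHermitian_lapMatrix ℝ) (G.lapMatrix_ne_zero hG)
    (G.lapMatrix_mulVec_const_eq_zero (R := ℝ))

variable {G}

theorem IsRegularOfDegree.sum_dualAdj (hreg : G.IsRegularOfDegree k) (e : G.edgeFinset) :
    ∑ f, dualAdj G e f = 2 * k - 2 := by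
  have h : ∑ f, (G.edgeIncMatrixᵀ * G.edgeIncMatrix) e f = 2 * k := by
    simp only [mul_apply, transpose_apply]
    rw [Finset.sum_comm]
    simp only [← Finset.mul_sum, sum_edgeIncMatrix_row, hreg.degree_eq, ← Finset.sum_mul,
      sum_edgeIncMatrix_col]
  rw [edgeIncMatrix_transpose_mul] at h
  simp only [Matrix.add_apply, Matrix.smul_apply, one_apply, smul_eq_mul, mul_ite, mul_one,
    mul_zero, Finset.sum_add_distrib, Finset.sum_ite_eq, Finset.mem_univ, if_true] at h
  linarith

theorem IsRegularOfDegree.card_adjacent_edges (hreg : G.IsRegularOfDegree k) (hk : 1 ≤ k)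
    (e : G.edgeFinset) :
    #{f | e ≠ f ∧ ∃ v, v ∈ (e : Sym2 V) ∧ v ∈ (f : Sym2 V)} = 2 * (k - 1) := by
  have h : (#{f | e ≠ f ∧ ∃ v, v ∈ (e : Sym2 V) ∧ v ∈ (f : Sym2 V)} : ℝ) =
      ∑ f, dualAdj G e f := by
    rw [← Finset.sum_boole]
    rfl
  rw [hreg.sum_dualAdj] at h
  exact_mod_cast h.trans (by push_cast [Nat.cast_sub hk]; ring :
    (2 * k - 2 : ℝ) = ((2 * (k - 1) : ℕ) : ℝ))

theorem IsRegularOfDegree.degMatrix_eq (hreg : G.IsRegularOfDegree k) :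
    G.degMatrix ℝ = (k : ℝ) • 1 := by
  ext v w
  by_cases hvw : v = w
  · subst hvw
    simp [degMatrix, hreg.degree_eq]
  · simp [degMatrix, hvw]

theorem IsRegularOfDegree.lapMatrix_eq_smul_one_sub_adjMatrix (hreg : G.IsRegularOfDegree k) :
    G.lapMatrix ℝ = (k : ℝ) • 1 - G.adjMatrix ℝ := by
  rw [lapMatrix, hreg.degMatrix_eq]

theorem IsRegularOfDegree.lapMatrix_eq_smul_one_sub_edgeIncMatrix_mul_transpose
    (hreg : G.IsRegularOfDegree k) :
    G.lapMatrix ℝ = (2 * k : ℝ) • 1 - G.edgeIncMatrix * G.edgeIncMatrixᵀ := by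
  rw [lapMatrix, edgeIncMatrix_mul_transpose, hreg.degMatrix_eq]
  module

theorem IsRegularOfDegree.csInf_sumZeroSpectrum_lapMatrix [Nonempty V]
    (hreg : G.IsRegularOfDegree k) (hk : 2 ≤ k) :
    sInf (sumZeroSpectrum (G.lapMatrix ℝ)) =
      sInf (sumZeroSpectrum ((2 * ((k : ℝ) - 1)) • 1 - dualAdj G)) := by
  have hne := G.sumZeroSpectrum_lapMatrix_nonempty (hreg.ne_bot (by omega))
  rw [hreg.lapMatrix_eq_smul_one_sub_edgeIncMatrix_mul_transpose] at hne ⊢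
  rw [smul_one_sub_dualAdj]
  refine csInf_sumZeroSpectrum_smul_one_sub_mul_transpose (a := k) (fun v => ?_)
    G.sum_edgeIncMatrix_col two_ne_zero (hreg.card_le_card_edgeFinset hk) hne
  rw [sum_edgeIncMatrix_row, hreg.degree_eq]

end SimpleGraph

theorem lineGraph_regular_and_eigenvalue_relation_general {V : Type} [Fintype V]
    [DecidableEq V] [Nonempty V] (G : SimpleGraph V) [DecidableRel G.Adj]
    (k : ℕ) (hk : 2 ≤ k) (hreg : ∀ v, G.degree v = k) :
    (∀ e : G.edgeFinset,
      (Finset.univ.filter (fun f : G.edgeFinset =>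
        e ≠ f ∧ ∃ v, v ∈ (e : Sym2 V) ∧ v ∈ (f : Sym2 V))).card = 2 * (k - 1)) ∧
    (k : ℝ) *
      sInf {μ : ℝ | ∃ g : V → ℝ, g ≠ 0 ∧
        (Matrix.of fun v w => (if v = w then (1:ℝ) else 0) -
          (G.adjMatrix ℝ) v w / (k : ℝ)).mulVec g = μ • g ∧ ∑ v, g v = 0} =
    2 * ((k : ℝ) - 1) *
      sInf {μ : ℝ | ∃ g : G.edgeFinset → ℝ, g ≠ 0 ∧
        (Matrix.of fun e f => (if e = f then (1:ℝ) else 0) -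
          dualAdj G e f / (2 * ((k : ℝ) - 1))).mulVec g = μ • g ∧ ∑ e, g e = 0} := by
  have hreg : G.IsRegularOfDegree k := hreg
  have hk2 : (2 : ℝ) ≤ k := by exact_mod_cast hk
  have hk0 : (0 : ℝ) < k := by linarith
  have hk1 : (0 : ℝ) < 2 * ((k : ℝ) - 1) := by linarith
  refine ⟨hreg.card_adjacent_edges (by omega), ?_⟩
  change (k : ℝ) * sInf (sumZeroSpectrum _) = 2 * ((k : ℝ) - 1) * sInf (sumZeroSpectrum _)
  rw [← csInf_sumZeroSpectrum_smul _ hk0, ← csInf_sumZeroSpectrum_smul _ hk1,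
    smul_of_one_sub_div _ hk0.ne', smul_of_one_sub_div _ hk1.ne',
    ← hreg.lapMatrix_eq_smul_one_sub_adjMatrix]
  exact hreg.csInf_sumZeroSpectrum_lapMatrix hk

/-- For a finite connected `k`-regular simple graph `X` (`k ≥ 2`), the line
graph `X*` is `2(k-1)`-regular, and the second smallest normalized Laplacian
eigenvalues (smallest eigenvalues orthogonal to the constant bottom
eigenvectors) satisfy `k·λ₂(X) = 2(k-1)·λ₂(X*)`. -/
theorem lineGraph_regular_and_eigenvalue_relation {V : Type} [Fintype V]
    [DecidableEq V] [Nonempty V] (G : SimpleGraph V) [DecidableRel G.Adj]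
    (k : ℕ) (hk : 2 ≤ k) (hconn : G.Connected) (hreg : ∀ v, G.degree v = k) :
    (∀ e : G.edgeFinset,
      (Finset.univ.filter (fun f : G.edgeFinset =>
        e ≠ f ∧ ∃ v, v ∈ (e : Sym2 V) ∧ v ∈ (f : Sym2 V))).card = 2 * (k - 1)) ∧
    (k : ℝ) *
      sInf {μ : ℝ | ∃ g : V → ℝ, g ≠ 0 ∧
        (Matrix.of fun v w => (if v = w then (1:ℝ) else 0) -
          (G.adjMatrix ℝ) v w / (k : ℝ)).mulVec g = μ • g ∧ ∑ v, g v = 0} =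
    2 * ((k : ℝ) - 1) *
      sInf {μ : ℝ | ∃ g : G.edgeFinset → ℝ, g ≠ 0 ∧
        (Matrix.of fun e f => (if e = f then (1:ℝ) else 0) -
          dualAdj G e f / (2 * ((k : ℝ) - 1))).mulVec g = μ • g ∧ ∑ e, g e = 0} :=
  lineGraph_regular_and_eigenvalue_relation_general G k hk hreg
end

section
/- Let G be a finite abelian group, S a symmetric multiset of size k, and F: S → GL(N,ℂ) with F(s^{-1}) = F(s)*, defining a Hermitian symmetric transmission system P(x,y,s) = F(s) on the Cayley graph (X,G;S). Then the eigenvalues of the transmission graph Laplacian Δ^P are exactly 1 − (1/k)·μ, where μ ranges over the eigenvalues of the N×N matrices Σ_{s∈S} χ(s)F(s) as χ ranges over the irreducible characters of G. -/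
/-!
`Δ^P = 1 - (1/k) A` where `(A f)(x) = Σₛ K(s) f(x s)` with `K(s) = count_S(s) F(s)`. The operator `A` commutes with translations, so the character coefficients
`f̂(χ) = Σ_y χ(y⁻¹) f(y)` diagonalise it blockwise: the coefficient of `Σₛ K(s) f(x s)` at `χ` is
`(Σₛ χ(s) K(s)) f̂(χ)`. An eigenfunction has some nonzero coefficient by Fourier inversion, which
is then an eigenvector of `Σₛ χ(s) K(s)`; conversely `g ↦ χ(g) v` lifts an eigenvector `v` of that
matrix to an eigenfunction with the same eigenvalue.
-/

open Finset Matrix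

/-- The transmission graph Laplacian of the Cayley graph `(X,G;S)` of a finite
abelian group with the Hermitian symmetric transmission system
`P(x,y,s) = F(s) = F(x⁻¹y)`:
`(Δ^P f)(x) = f(x) - (1/k) Σ_g count_S(x⁻¹g) · F(x⁻¹g) f(g)`. -/
noncomputable def cayleyTransLap {G : Type} [CommGroup G] [Fintype G]
    [DecidableEq G] (N : ℕ) (S : Multiset G) (k : ℕ)
    (F : G → Matrix (Fin N) (Fin N) ℂ) (f : G → Fin N → ℂ) : G → Fin N → ℂ :=
  fun x => f x - (k : ℂ)⁻¹ •
    ∑ g : G, (S.count (x⁻¹ * g) : ℂ) • (F (x⁻¹ * g)).mulVec (f g)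

section CharCoeff

variable {G : Type*} [CommGroup G]

/-- Mathlib's duality theory for finite abelian groups is phrased with additive characters. -/
def AddChar.toMulMonoidHom (ψ : AddChar (Additive G) ℂ) : G →* ℂ :=
  ψ.toMonoidHom.comp (MulEquiv.multiplicativeAdditive G).symm.toMonoidHom

@[simp]
lemma AddChar.toMulMonoidHom_apply (ψ : AddChar (Additive G) ℂ) (g : G) :
    ψ.toMulMonoidHom g = ψ (Additive.ofMul g) :=
  rfl

variable [Fintype G] {V : Type*} [AddCommGroup V] [Module ℂ V]

noncomputable def charCoeff (χ : G →* ℂ) (f : G → V) : V :=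
  ∑ y, χ y⁻¹ • f y

lemma charCoeff_smul (χ : G →* ℂ) (c : ℂ) (f : G → V) :
    charCoeff χ (c • f) = c • charCoeff χ f := by
  simp only [charCoeff, Pi.smul_apply, smul_sum, smul_comm c]

lemma sum_addChar_smul_charCoeff (f : G → V) (x : G) :
    ∑ ψ : AddChar (Additive G) ℂ, ψ (Additive.ofMul x) • charCoeff ψ.toMulMonoidHom f =
      (Fintype.card G : ℂ) • f x := by
  classical
  have horth (y : G) :
      ∑ ψ : AddChar (Additive G) ℂ, ψ (Additive.ofMul x) * ψ (Additive.ofMul y⁻¹) =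
        if y = x then (Fintype.card G : ℂ) else 0 := by
    simp_rw [← AddChar.map_add_eq_mul, AddChar.sum_apply_eq_ite, ← ofMul_mul, ofMul_eq_zero,
      mul_inv_eq_one, eq_comm, Fintype.card_congr Additive.toMul]
  simp only [charCoeff, smul_sum, smul_smul, AddChar.toMulMonoidHom_apply]
  rw [sum_comm]
  simp only [← sum_smul, horth, ite_smul, zero_smul, sum_ite_eq', mem_univ, if_true]

lemma eq_zero_of_forall_charCoeff_eq_zero {f : G → V} (h : ∀ χ : G →* ℂ, charCoeff χ f = 0) :
    f = 0 := by
  funext x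
  have hinv := sum_addChar_smul_charCoeff f x
  rw [sum_eq_zero fun ψ _ => by rw [h, smul_zero]] at hinv
  exact (smul_eq_zero.mp hinv.symm).resolve_left (Nat.cast_ne_zero.mpr Fintype.card_ne_zero)

end CharCoeff

section CayleyAdjOp

variable {G : Type*} [CommGroup G] [Fintype G] {n : Type*} [Fintype n]

noncomputable def cayleyAdjOp (K : G → Matrix n n ℂ) (f : G → n → ℂ) : G → n → ℂ :=
  fun x => ∑ s, K s *ᵥ f (x * s)

noncomputable def charSum (K : G → Matrix n n ℂ) (χ : G →* ℂ) : Matrix n n ℂ :=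
  ∑ s, χ s • K s

lemma cayleyAdjOp_char_smul (K : G → Matrix n n ℂ) (χ : G →* ℂ) (v : n → ℂ) :
    cayleyAdjOp K (fun g => χ g • v) = fun x => χ x • (charSum K χ *ᵥ v) := by
  funext x
  simp only [cayleyAdjOp, charSum, map_mul, mulVec_smul, sum_mulVec, smul_mulVec, smul_sum,
    mul_smul]

lemma charCoeff_cayleyAdjOp (K : G → Matrix n n ℂ) (χ : G →* ℂ) (f : G → n → ℂ) :
    charCoeff χ (cayleyAdjOp K f) = charSum K χ *ᵥ charCoeff χ f := by
  calc charCoeff χ (cayleyAdjOp K f)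
      = ∑ s, ∑ y, χ y⁻¹ • K s *ᵥ f (y * s) := by
        simp only [charCoeff, cayleyAdjOp, smul_sum]
        exact sum_comm
    _ = ∑ s, ∑ g, χ s • χ g⁻¹ • K s *ᵥ f g := by
        refine sum_congr rfl fun s _ => Fintype.sum_equiv (Equiv.mulRight s) _ _ fun g => ?_
        simp [← smul_assoc, ← map_mul, mul_comm]
    _ = charSum K χ *ᵥ charCoeff χ f := by
        simp only [charSum, charCoeff, sum_mulVec, mulVec_sum, smul_mulVec, mulVec_smul, smul_sum]
        rw [sum_comm]
        exact sum_congr rfl fun _ _ => sum_congr rfl fun _ _ => smul_comm _ _ _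

lemma exists_cayleyAdjOp_eigenvector_iff (K : G → Matrix n n ℂ) (ν : ℂ) :
    (∃ f : G → n → ℂ, f ≠ 0 ∧ cayleyAdjOp K f = ν • f) ↔
      ∃ (χ : G →* ℂ) (v : n → ℂ), v ≠ 0 ∧ charSum K χ *ᵥ v = ν • v := by
  constructor
  · rintro ⟨f, hf, hAf⟩
    obtain ⟨χ, hχ⟩ : ∃ χ : G →* ℂ, charCoeff χ f ≠ 0 := by
      by_contra! h
      exact hf (eq_zero_of_forall_charCoeff_eq_zero h)
    exact ⟨χ, _, hχ, by rw [← charCoeff_cayleyAdjOp, hAf, charCoeff_smul]⟩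
  · rintro ⟨χ, v, hv, hKv⟩
    refine ⟨fun g => χ g • v, fun h => hv (by simpa using congrFun h 1), ?_⟩
    rw [cayleyAdjOp_char_smul, hKv]
    funext x
    exact smul_comm _ _ _

end CayleyAdjOp

lemma cayleyTransLap_eq {G : Type} [CommGroup G] [Fintype G] [DecidableEq G] (N : ℕ)
    (S : Multiset G) (k : ℕ) (F : G → Matrix (Fin N) (Fin N) ℂ) (f : G → Fin N → ℂ) :
    cayleyTransLap N S k F f = f - (k : ℂ)⁻¹ • cayleyAdjOp (fun s => (S.count s : ℂ) • F s) f := by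
  funext x
  simp only [cayleyTransLap, cayleyAdjOp, Pi.sub_apply, Pi.smul_apply, smul_mulVec]
  congr 2
  exact (Fintype.sum_equiv (Equiv.mulLeft x) _ _ fun s => by simp).symm

theorem cayley_transLap_eigenvalues_general {G : Type} [CommGroup G] [Fintype G]
    [DecidableEq G] (N : ℕ) (S : Multiset G) (k : ℕ)
    (hk0 : 0 < k)
    (F : G → Matrix (Fin N) (Fin N) ℂ)
    (μ : ℂ) :
    (∃ f : G → Fin N → ℂ, f ≠ 0 ∧ cayleyTransLap N S k F f = μ • f) ↔
    ∃ (χ : G →* ℂ) (ν : ℂ) (v : Fin N → ℂ), v ≠ 0 ∧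
      (∑ g : G, (S.count g : ℂ) • (χ g • F g)).mulVec v = ν • v ∧
      μ = 1 - (k : ℂ)⁻¹ * ν := by
  have hk : (k : ℂ) ≠ 0 := by exact_mod_cast hk0.ne'
  set K : G → Matrix (Fin N) (Fin N) ℂ := fun s => (S.count s : ℂ) • F s
  have hlap (f : G → Fin N → ℂ) :
      cayleyTransLap N S k F f = μ • f ↔ cayleyAdjOp K f = (k * (1 - μ)) • f := by
    rw [cayleyTransLap_eq, sub_eq_iff_eq_add', ← sub_eq_iff_eq_add, eq_comm, inv_smul_eq_iff₀ hk]
    constructor <;> intro h <;> rw [h] <;> module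
  have hcharSum (χ : G →* ℂ) : ∑ g, (S.count g : ℂ) • (χ g • F g) = charSum K χ :=
    sum_congr rfl fun _ _ => smul_comm _ _ _
  simp only [hlap, hcharSum, exists_cayleyAdjOp_eigenvector_iff]
  constructor
  · rintro ⟨χ, v, hv, hKv⟩
    exact ⟨χ, _, v, hv, hKv, by field_simp; ring⟩
  · rintro ⟨χ, ν, v, hv, hKv, rfl⟩
    refine ⟨χ, v, hv, ?_⟩
    rwa [show (k : ℂ) * (1 - (1 - (k : ℂ)⁻¹ * ν)) = ν by field_simp; ring]

/-- Eigenvalues of Cayley graphs with transmission systems: for a finite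
abelian group `G`, a symmetric multiset `S` of size `k`, and
`F : S → GL(N,ℂ)` with `F(s⁻¹) = F(s)ᴴ` (a Hermitian symmetric transmission
system on the Cayley graph `(X,G;S)`), the eigenvalues of the transmission
graph Laplacian `Δ^P` are exactly the numbers `1 - (1/k)·ν` where `ν` ranges
over the eigenvalues of the matrices `Σ_{s ∈ S} χ(s) F(s)` as `χ` ranges over
the irreducible characters of `G`. -/
theorem cayley_transLap_eigenvalues {G : Type} [CommGroup G] [Fintype G]
    [DecidableEq G] (N : ℕ) (S : Multiset G) (k : ℕ)
    (hk : Multiset.card S = k) (hk0 : 0 < k)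
    (hsymm : ∀ s : G, S.count s⁻¹ = S.count s)
    (F : G → Matrix (Fin N) (Fin N) ℂ)
    (hF : ∀ s : G, F s⁻¹ = (F s)ᴴ)
    (hFinv : ∀ s : G, IsUnit (F s).det) (μ : ℂ) :
    (∃ f : G → Fin N → ℂ, f ≠ 0 ∧ cayleyTransLap N S k F f = μ • f) ↔
    ∃ (χ : G →* ℂ) (ν : ℂ) (v : Fin N → ℂ), v ≠ 0 ∧
      (∑ g : G, (S.count g : ℂ) • (χ g • F g)).mulVec v = ν • v ∧
      μ = 1 - (k : ℂ)⁻¹ * ν :=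
  cayley_transLap_eigenvalues_general N S k hk0 F μ
end
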